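/- arXiv:2007.01101 — 6 statements merged into one kernel-verified Lean document; each statement's English description precedes it below -/
import Mathlib

section
/- Let K and L be convex bodies in ℝⁿ containing the origin, and let p > 1 with Hölder conjugate q. Then the set {(1-λ)^{1/q} x + λ^{1/q} y : x ∈ K, y ∈ L, 0 ≤ λ ≤ 1} equals the convex body whose support function h satisfies h(x)^p = h_K(x)^p + h_L(x)^p for all x ∈ ℝⁿ. -/
/-!
Substituting `a = (1 - t) ^ q⁻¹`, `b = t ^ q⁻¹` and using that `K` is star-shaped at the origin,
the set becomes `{a • x + b • y | x ∈ K, y ∈ L, a, b ≥ 0, a ^ q + b ^ q ≤ 1}`, which is convex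
because `s ↦ s ^ q` is convex. Its support function at `u` is the maximum of
`a * h_K(u) + b * h_L(u)` over that part of the unit `ℓ^q` ball, which by Hölder's inequality and
its equality case is the `ℓ^p` norm of `(h_K(u), h_L(u))`.
-/

open MeasureTheory Set Function

noncomputable section

abbrev En (n : ℕ) := EuclideanSpace ℝ (Fin n)

def suppFn {n : ℕ} (A : Set (En n)) (u : En n) : ℝ :=
  sSup ((fun y => (inner ℝ u y : ℝ)) '' A)

theorem mul_add_mul_le_of_rpow_add_rpow_le_one {p q x y a b : ℝ} (hpq : p.HolderConjugate q)
    (hx : 0 ≤ x) (hy : 0 ≤ y) (ha : 0 ≤ a) (hb : 0 ≤ b) (hab : a ^ q + b ^ q ≤ 1) :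
    a * x + b * y ≤ (x ^ p + y ^ p) ^ p⁻¹ := by
  have holder := Real.inner_le_Lp_mul_Lq Finset.univ ![x, y] ![a, b] hpq
  simp only [Fin.sum_univ_two, Matrix.cons_val_zero, Matrix.cons_val_one,
    abs_of_nonneg hx, abs_of_nonneg hy, abs_of_nonneg ha, abs_of_nonneg hb, one_div] at holder
  calc a * x + b * y = x * a + y * b := by ring
    _ ≤ (x ^ p + y ^ p) ^ p⁻¹ * (a ^ q + b ^ q) ^ q⁻¹ := holder
    _ ≤ (x ^ p + y ^ p) ^ p⁻¹ * 1 := by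
      gcongr
      exact Real.rpow_le_one (by positivity) hab hpq.symm.inv_nonneg
    _ = (x ^ p + y ^ p) ^ p⁻¹ := mul_one _

theorem exists_mul_add_mul_eq_rpow_add_rpow {p q x y : ℝ} (hpq : p.HolderConjugate q)
    (hx : 0 ≤ x) (hy : 0 ≤ y) :
    ∃ a b : ℝ, 0 ≤ a ∧ 0 ≤ b ∧ a ^ q + b ^ q ≤ 1 ∧ a * x + b * y = (x ^ p + y ^ p) ^ p⁻¹ := by
  set c := (x ^ p + y ^ p) ^ p⁻¹
  have hs : 0 ≤ x ^ p + y ^ p := by positivity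
  have hc : 0 ≤ c := Real.rpow_nonneg hs _
  rcases hc.eq_or_lt with hc0 | hc0
  · exact ⟨0, 0, le_rfl, le_rfl, by simp [Real.zero_rpow hpq.symm.ne_zero], by simp [← hc0]⟩
  have hcp : (x / c) ^ p + (y / c) ^ p = 1 := by
    rw [Real.div_rpow hx hc, Real.div_rpow hy hc, ← add_div, ← Real.rpow_inv_rpow hs hpq.ne_zero,
      div_self (Real.rpow_pos_of_pos hc0 p).ne']
  -- `(t / c) ^ (p - 1)` are the weights attaining equality in Hölder's inequality
  have weight : ∀ {t : ℝ}, 0 ≤ t →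
      ((t / c) ^ (p - 1)) ^ q = (t / c) ^ p ∧ (t / c) ^ (p - 1) * t = c * (t / c) ^ p := by
    intro t ht
    have htc : 0 ≤ t / c := div_nonneg ht hc0.le
    refine ⟨by rw [← Real.rpow_mul htc, hpq.sub_one_mul_conj], ?_⟩
    rw [← sub_add_cancel p 1, Real.rpow_add' htc (by simpa using hpq.ne_zero), Real.rpow_one,
      sub_add_cancel]
    field_simp [hc0.ne']
  obtain ⟨hxq, hxc⟩ := weight hx
  obtain ⟨hyq, hyc⟩ := weight hy
  refine ⟨(x / c) ^ (p - 1), (y / c) ^ (p - 1), by positivity, by positivity, ?_, ?_⟩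
  · rw [hxq, hyq, hcp]
  · rw [hxc, hyc, ← mul_add, hcp, mul_one]

section WeightedSums

open scoped Pointwise

variable {E : Type*} [AddCommGroup E] [Module ℝ E]

def fireySum (q : ℝ) (K L : Set E) : Set E :=
  {z | ∃ x ∈ K, ∃ y ∈ L, ∃ t ∈ Icc (0 : ℝ) 1, z = ((1 - t) ^ q⁻¹) • x + (t ^ q⁻¹) • y}

def lpWeightedSum (q : ℝ) (K L : Set E) : Set E :=
  {z | ∃ x ∈ K, ∃ y ∈ L, ∃ a b : ℝ, 0 ≤ a ∧ 0 ≤ b ∧ a ^ q + b ^ q ≤ 1 ∧ z = a • x + b • y}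

theorem Convex.exists_smul_add_smul_eq_smul {s : Set E} (hs : Convex ℝ s) {x₁ x₂ : E}
    (h₁ : x₁ ∈ s) (h₂ : x₂ ∈ s) {c₁ c₂ : ℝ} (hc₁ : 0 ≤ c₁) (hc₂ : 0 ≤ c₂) :
    ∃ x ∈ s, c₁ • x₁ + c₂ • x₂ = (c₁ + c₂) • x := by
  have hmem : c₁ • x₁ + c₂ • x₂ ∈ (c₁ + c₂) • s := by
    rw [hs.add_smul hc₁ hc₂]
    exact add_mem_add (smul_mem_smul_set h₁) (smul_mem_smul_set h₂)
  obtain ⟨x, hx, hx'⟩ := hmem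
  exact ⟨x, hx, hx'.symm⟩

theorem fireySum_eq_lpWeightedSum {q : ℝ} (hq : 0 < q) {K L : Set E} (hK : Convex ℝ K)
    (hK0 : 0 ∈ K) : fireySum q K L = lpWeightedSum q K L := by
  ext z
  constructor
  · rintro ⟨x, hx, y, hy, t, ⟨ht0, ht1⟩, rfl⟩
    refine ⟨x, hx, y, hy, _, _, by positivity, by positivity, ?_, rfl⟩
    rw [Real.rpow_inv_rpow (by linarith) hq.ne', Real.rpow_inv_rpow ht0 hq.ne']
    linarith
  · rintro ⟨x, hx, y, hy, a, b, ha, hb, hab, rfl⟩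
    have haq : 0 ≤ a ^ q := by positivity
    have hbq : 0 ≤ b ^ q := by positivity
    -- put `t = b ^ q`; shrinking the weight of `x` from `(1 - t) ^ q⁻¹` to `a` keeps `x` in `K`
    have haA : a ≤ (1 - b ^ q) ^ q⁻¹ := by
      rw [← Real.rpow_rpow_inv ha hq.ne']
      exact Real.rpow_le_rpow haq (by linarith) (inv_nonneg.2 hq.le)
    obtain ⟨x', hx', hxx'⟩ :=
      hK.exists_smul_add_smul_eq_smul hx hK0 ha (sub_nonneg.2 haA)
    refine ⟨x', hx', y, hy, b ^ q, ⟨hbq, by linarith⟩, ?_⟩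
    simp only [smul_zero, add_zero, add_sub_cancel] at hxx'
    rw [Real.rpow_rpow_inv hb hq.ne', ← hxx']

theorem convex_lpWeightedSum {q : ℝ} (hq : 1 ≤ q) {K L : Set E} (hK : Convex ℝ K)
    (hL : Convex ℝ L) : Convex ℝ (lpWeightedSum q K L) := by
  rintro _ ⟨x₁, hx₁, y₁, hy₁, a₁, b₁, ha₁, hb₁, hab₁, rfl⟩
    _ ⟨x₂, hx₂, y₂, hy₂, a₂, b₂, ha₂, hb₂, hab₂, rfl⟩ θ₁ θ₂ hθ₁ hθ₂ hθ
  have hconv := (convexOn_rpow hq).2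
  have ha := hconv (mem_Ici.2 ha₁) (mem_Ici.2 ha₂) hθ₁ hθ₂ hθ
  have hb := hconv (mem_Ici.2 hb₁) (mem_Ici.2 hb₂) hθ₁ hθ₂ hθ
  simp only [smul_eq_mul] at ha hb
  obtain ⟨x, hx, hxx⟩ := hK.exists_smul_add_smul_eq_smul hx₁ hx₂
    (mul_nonneg hθ₁ ha₁) (mul_nonneg hθ₂ ha₂)
  obtain ⟨y, hy, hyy⟩ := hL.exists_smul_add_smul_eq_smul hy₁ hy₂
    (mul_nonneg hθ₁ hb₁) (mul_nonneg hθ₂ hb₂)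
  refine ⟨x, hx, y, hy, θ₁ * a₁ + θ₂ * a₂, θ₁ * b₁ + θ₂ * b₂, by positivity, by positivity,
    by nlinarith, ?_⟩
  rw [← hxx, ← hyy]
  simp only [smul_add, smul_smul]
  abel

theorem isCompact_fireySum [TopologicalSpace E] [ContinuousAdd E] [ContinuousSMul ℝ E]
    {q : ℝ} (hq : 0 ≤ q) {K L : Set E} (hK : IsCompact K) (hL : IsCompact L) :
    IsCompact (fireySum q K L) := by
  have himage : fireySum q K L = (fun w : E × E × ℝ => ((1 - w.2.2) ^ q⁻¹) • w.1 +
      (w.2.2 ^ q⁻¹) • w.2.1) '' (K ×ˢ L ×ˢ Icc 0 1) := by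
    ext z
    constructor
    · rintro ⟨x, hx, y, hy, t, ht, rfl⟩
      exact ⟨(x, y, t), ⟨hx, hy, ht⟩, rfl⟩
    · rintro ⟨⟨x, y, t⟩, ⟨hx, hy, ht⟩, rfl⟩
      exact ⟨x, hx, y, hy, t, ht, rfl⟩
  rw [himage]
  exact (hK.prod (hL.prod isCompact_Icc)).image (by fun_prop (disch := exact inv_nonneg.2 hq))

end WeightedSums

theorem isGreatest_suppFn {n : ℕ} {K : Set (En n)} (hK : IsCompact K) (hne : K.Nonempty)
    (u : En n) : IsGreatest ((fun y => (inner ℝ u y : ℝ)) '' K) (suppFn K u) :=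
  (hK.image (continuous_const.inner continuous_id)).isGreatest_sSup (hne.image _)

theorem suppFn_nonneg {n : ℕ} {K : Set (En n)} (hK : IsCompact K) (hK0 : 0 ∈ K) (u : En n) :
    0 ≤ suppFn K u :=
  (isGreatest_suppFn hK ⟨0, hK0⟩ u).2 ⟨0, hK0, inner_zero_right u⟩

theorem suppFn_lpWeightedSum {n : ℕ} {p q : ℝ} (hpq : p.HolderConjugate q) {K L : Set (En n)}
    (hK : IsCompact K) (hL : IsCompact L) (hK0 : 0 ∈ K) (hL0 : 0 ∈ L) (u : En n) :
    suppFn (lpWeightedSum q K L) u = (suppFn K u ^ p + suppFn L u ^ p) ^ p⁻¹ := by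
  obtain ⟨⟨x, hx, hxu⟩, hKu⟩ := isGreatest_suppFn hK ⟨0, hK0⟩ u
  obtain ⟨⟨y, hy, hyu⟩, hLu⟩ := isGreatest_suppFn hL ⟨0, hL0⟩ u
  have inner_eq (a b : ℝ) (x y : En n) :
      (inner ℝ u (a • x + b • y) : ℝ) = a * inner ℝ u x + b * inner ℝ u y := by
    rw [inner_add_right, real_inner_smul_right, real_inner_smul_right]
  refine IsGreatest.csSup_eq ⟨?_, ?_⟩
  · obtain ⟨a, b, ha, hb, hab, habu⟩ := exists_mul_add_mul_eq_rpow_add_rpow hpq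
      (suppFn_nonneg hK hK0 u) (suppFn_nonneg hL hL0 u)
    refine ⟨a • x + b • y, ⟨x, hx, y, hy, a, b, ha, hb, hab, rfl⟩, ?_⟩
    simp only [inner_eq, hxu, hyu, habu]
  · rintro _ ⟨_, ⟨x, hx, y, hy, a, b, ha, hb, hab, rfl⟩, rfl⟩
    calc (inner ℝ u (a • x + b • y) : ℝ) = a * inner ℝ u x + b * inner ℝ u y := inner_eq ..
      _ ≤ a * suppFn K u + b * suppFn L u := by
        gcongr
        exacts [hKu ⟨x, hx, rfl⟩, hLu ⟨y, hy, rfl⟩]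
      _ ≤ _ := mul_add_mul_le_of_rpow_add_rpow_le_one hpq (suppFn_nonneg hK hK0 u)
        (suppFn_nonneg hL hL0 u) ha hb hab

/-- A compact convex set is determined by its support function, so the convex body of the
statement is described as a compact convex set with the stated support function. -/
theorem lyz_pointwise_formula_general {n : ℕ} (p q : ℝ) (hp : 1 < p) (hpq : p⁻¹ + q⁻¹ = 1)
    (K L : Set (En n)) (hKc : IsCompact K) (hLc : IsCompact L)
    (hKconv : Convex ℝ K) (hLconv : Convex ℝ L)
    (hK0 : (0 : En n) ∈ K) (hL0 : (0 : En n) ∈ L) :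
    IsCompact {z | ∃ x ∈ K, ∃ y ∈ L, ∃ t ∈ Icc (0:ℝ) 1,
        z = ((1 - t) ^ q⁻¹) • x + (t ^ q⁻¹) • y} ∧
    Convex ℝ {z | ∃ x ∈ K, ∃ y ∈ L, ∃ t ∈ Icc (0:ℝ) 1,
        z = ((1 - t) ^ q⁻¹) • x + (t ^ q⁻¹) • y} ∧
    ∀ u, suppFn {z | ∃ x ∈ K, ∃ y ∈ L, ∃ t ∈ Icc (0:ℝ) 1,
        z = ((1 - t) ^ q⁻¹) • x + (t ^ q⁻¹) • y} u ^ p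
      = suppFn K u ^ p + suppFn L u ^ p := by
  have hconj : p.HolderConjugate q := Real.holderConjugate_iff.mpr ⟨hp, hpq⟩
  have hM : fireySum q K L = lpWeightedSum q K L :=
    fireySum_eq_lpWeightedSum hconj.symm.pos hKconv hK0
  change IsCompact (fireySum q K L) ∧ Convex ℝ (fireySum q K L) ∧
    ∀ u, suppFn (fireySum q K L) u ^ p = suppFn K u ^ p + suppFn L u ^ p
  refine ⟨isCompact_fireySum hconj.symm.nonneg hKc hLc, ?_, fun u => ?_⟩
  · exact hM ▸ convex_lpWeightedSum hconj.symm.lt.le hKconv hLconv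
  rw [hM, suppFn_lpWeightedSum hconj hKc hLc hK0 hL0,
    Real.rpow_inv_rpow (add_nonneg (Real.rpow_nonneg (suppFn_nonneg hKc hK0 u) p)
      (Real.rpow_nonneg (suppFn_nonneg hLc hL0 u) p)) hconj.ne_zero]

/-- **The Lutwak–Yang–Zhang pointwise formula for the Firey `L_p` sum**: for convex
bodies `K, L` containing the origin and `p > 1` with Hölder conjugate `q`, the set
`{(1-t)^{1/q} x + t^{1/q} y : x ∈ K, y ∈ L, 0 ≤ t ≤ 1}` is the convex body whose
support function `h` satisfies `h^p = h_K^p + h_L^p`. Since a compact convex set is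
determined by its support function, this is expressed by saying the set is compact,
convex, and its support function satisfies the identity. -/
theorem lyz_pointwise_formula {n : ℕ} (p q : ℝ) (hp : 1 < p) (hpq : p⁻¹ + q⁻¹ = 1)
    (K L : Set (En n)) (hKc : IsCompact K) (hLc : IsCompact L)
    (hKconv : Convex ℝ K) (hLconv : Convex ℝ L)
    (hKint : (interior K).Nonempty) (hLint : (interior L).Nonempty)
    (hK0 : (0 : En n) ∈ K) (hL0 : (0 : En n) ∈ L) :
    IsCompact {z | ∃ x ∈ K, ∃ y ∈ L, ∃ t ∈ Icc (0:ℝ) 1,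
        z = ((1 - t) ^ q⁻¹) • x + (t ^ q⁻¹) • y} ∧
    Convex ℝ {z | ∃ x ∈ K, ∃ y ∈ L, ∃ t ∈ Icc (0:ℝ) 1,
        z = ((1 - t) ^ q⁻¹) • x + (t ^ q⁻¹) • y} ∧
    ∀ u, suppFn {z | ∃ x ∈ K, ∃ y ∈ L, ∃ t ∈ Icc (0:ℝ) 1,
        z = ((1 - t) ^ q⁻¹) • x + (t ^ q⁻¹) • y} u ^ p
      = suppFn K u ^ p + suppFn L u ^ p :=
  lyz_pointwise_formula_general p q hp hpq K L hKc hLc hKconv hLconv hK0 hL0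

end
end

section
/- Let M ⊂ ℝ² be a nonempty compact convex set with nonnegative coordinates, M ≠ {(0,0)}, let s > 0, and let f, g : ℝⁿ → [0,∞) be s-concave functions. Then the function f ⊕_{M,s} g is s-concave. -/
open MeasureTheory Set Function
open scoped Classical

noncomputable section

def fsupp {n : ℕ} (f : En n → ℝ) : Set (En n) := closure (Function.support f)

/-- `f` is `s`-concave: its support is nonempty, compact and convex, and `f^{1/s}`
is concave on the support. -/
def IsSConcave {n : ℕ} (s : ℝ) (f : En n → ℝ) : Prop :=
  (fsupp f).Nonempty ∧ IsCompact (fsupp f) ∧ Convex ℝ (fsupp f) ∧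
  ConcaveOn ℝ (fsupp f) (fun x => f x ^ s⁻¹)

/-- `M`-addition of sets: `K ⊕_M L = {a•x + b•y : (a,b) ∈ M, x ∈ K, y ∈ L}`. -/
def MAdd {E : Type*} [AddCommMonoid E] [Module ℝ E] (M : Set (ℝ × ℝ)) (K L : Set E) :
    Set E :=
  {z | ∃ ab ∈ M, ∃ x ∈ K, ∃ y ∈ L, z = ab.1 • x + ab.2 • y}

/-- the function `f ⊕_{M,s} g`. -/
def oplusM {n : ℕ} (M : Set (ℝ × ℝ)) (s : ℝ) (f g : En n → ℝ) : En n → ℝ := fun z =>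
  if z ∈ MAdd M (fsupp f) (fsupp g) then
    sSup {r | ∃ ab ∈ M, ∃ x ∈ fsupp f, ∃ y ∈ fsupp g,
      z = ab.1 • x + ab.2 • y ∧ r = (ab.1 * f x ^ s⁻¹ + ab.2 * g y ^ s⁻¹) ^ s}
  else 0

lemma bddAbove_of_concaveOn {n : ℕ} {K : Set (En n)} (hKconv : Convex ℝ K)
    (hKb : IsCompact K) {F : En n → ℝ} (hF : ConcaveOn ℝ K F)
    (hF0 : ∀ x ∈ K, 0 ≤ F x) : ∃ C : ℝ, ∀ x ∈ K, F x ≤ C := by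
  rcases K.eq_empty_or_nonempty with rfl | hne
  · exact ⟨0, by simp⟩
  obtain ⟨q, hq⟩ := hne.intrinsicInterior hKconv
  rw [intrinsicInterior] at hq
  obtain ⟨q', hq', rfl⟩ := hq
  rw [mem_interior_iff_mem_nhds, Metric.mem_nhds_iff] at hq'
  obtain ⟨ε, hε, hball⟩ := hq'
  have hqK : (q' : En n) ∈ K := hball (Metric.mem_ball_self hε)
  obtain ⟨D, hD⟩ := ((hKb.image (continuous_id.dist continuous_const)).bddAbove :
    BddAbove ((fun x => dist x (q' : En n)) '' K))
  have hDd : ∀ x ∈ K, dist x (q' : En n) ≤ D := fun x hx => hD (mem_image_of_mem _ hx)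
  have hD0 : 0 ≤ D := le_trans (by simp) (hDd _ hqK)
  set ρ : ℝ := (ε / 2) / (D + 1) with hρdef
  have hρ : 0 < ρ := by positivity
  refine ⟨F q' * (1 + ρ) / ρ, fun x hx => ?_⟩
  set w : En n := ρ • ((q' : En n) - x) + (q' : En n) with hw
  have hw_span : w ∈ affineSpan ℝ K := by
    have := AffineSubspace.smul_vsub_vadd_mem (affineSpan ℝ K) ρ
      (subset_affineSpan ℝ K hqK) (subset_affineSpan ℝ K hx) (subset_affineSpan ℝ K hqK)
    simpa [vsub_eq_sub, vadd_eq_add] using this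
  have hdist : dist w (q' : En n) < ε := by
    have h1 : dist w (q' : En n) = ρ * ‖(q' : En n) - x‖ := by
      rw [dist_eq_norm]
      simp [hw, norm_smul, abs_of_pos hρ]
    have h2 : ‖(q' : En n) - x‖ ≤ D := by
      rw [← dist_eq_norm, dist_comm]
      exact hDd x hx
    have : ρ * ‖(q' : En n) - x‖ ≤ ρ * D := by nlinarith [norm_nonneg ((q' : En n) - x)]
    have hρD : ρ * D < ε := by
      rw [hρdef]
      rw [div_mul_eq_mul_div, div_lt_iff₀ (by positivity)]
      nlinarith
    linarith
  have hwK : w ∈ K := by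
    have : (⟨w, hw_span⟩ : affineSpan ℝ K) ∈ Metric.ball q' ε := by
      rw [Metric.mem_ball, Subtype.dist_eq]
      exact hdist
    exact hball this
  set a : ℝ := ρ / (1 + ρ) with hadef
  set b : ℝ := 1 / (1 + ρ) with hbdef
  have ha : 0 < a := by positivity
  have hb : 0 ≤ b := by positivity
  have hab : a + b = 1 := by rw [hadef, hbdef]; field_simp; ring
  have hcomb : a • x + b • w = (q' : En n) := by
    rw [hw, hadef, hbdef]
    match_scalars <;> (field_simp; try ring)
  have hineq := hF.2 hx hwK ha.le hb hab
  rw [hcomb, smul_eq_mul, smul_eq_mul] at hineq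
  have hFw : 0 ≤ F w := hF0 w hwK
  have key : a * F x ≤ F q' := by nlinarith
  rw [hadef, div_mul_eq_mul_div, div_le_iff₀ (show (0:ℝ) < 1+ρ by positivity)] at key
  rw [le_div_iff₀ hρ]
  nlinarith [key]

lemma combo_aux {n : ℕ} {K : Set (En n)} {F : En n → ℝ} (hFc : ConcaveOn ℝ K F)
    {x1 x2 : En n} (hx1 : x1 ∈ K) (hx2 : x2 ∈ K) {c1 c2 : ℝ} (hc1 : 0 ≤ c1) (hc2 : 0 ≤ c2) :
    ∃ x ∈ K, (c1 + c2) • x = c1 • x1 + c2 • x2 ∧ c1 * F x1 + c2 * F x2 ≤ (c1 + c2) * F x := by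
  rcases eq_or_lt_of_le (add_nonneg hc1 hc2) with hσ | hσ
  · have h1 : c1 = 0 := by linarith
    have h2 : c2 = 0 := by linarith
    refine ⟨x1, hx1, ?_, ?_⟩
    · rw [h1, h2]; simp
    · rw [h1, h2]; simp
  · have hσ' : c1 + c2 ≠ 0 := ne_of_gt hσ
    have hmem : (c1/(c1+c2)) • x1 + (c2/(c1+c2)) • x2 ∈ K :=
      hFc.1 hx1 hx2 (div_nonneg hc1 hσ.le) (div_nonneg hc2 hσ.le) (by field_simp)
    refine ⟨(c1/(c1+c2)) • x1 + (c2/(c1+c2)) • x2, hmem, ?_, ?_⟩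
    · rw [smul_add, smul_smul, smul_smul]
      congr 1 <;> congr 1 <;> field_simp
    · have hcc := hFc.2 hx1 hx2 (div_nonneg hc1 hσ.le) (div_nonneg hc2 hσ.le) (by field_simp)
      rw [smul_eq_mul, smul_eq_mul] at hcc
      have := mul_le_mul_of_nonneg_left hcc hσ.le
      calc c1 * F x1 + c2 * F x2
          = (c1+c2) * (c1/(c1+c2) * F x1 + c2/(c1+c2) * F x2) := by field_simp; try ring
        _ ≤ (c1+c2) * F ((c1/(c1+c2)) • x1 + (c2/(c1+c2)) • x2) := this

/-- Lemma 3.1 (i): if `M` is a nonempty compact **convex** set with nonnegative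
coordinates, `M ≠ {(0,0)}`, and `f, g` are `s`-concave, then `f ⊕_{M,s} g` is `s`-concave. -/
theorem oplusM_isSConcave_of_convex {n : ℕ} (M : Set (ℝ × ℝ)) (s : ℝ) (hs : 0 < s)
    (hMne : M.Nonempty) (hMc : IsCompact M) (hMconv : Convex ℝ M)
    (hMpos : ∀ ab ∈ M, 0 ≤ ab.1 ∧ 0 ≤ ab.2) (hM0 : M ≠ {(0, 0)})
    (f g : En n → ℝ) (hf0 : ∀ x, 0 ≤ f x) (hg0 : ∀ x, 0 ≤ g x)
    (hf : IsSConcave s f) (hg : IsSConcave s g) :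
    IsSConcave s (oplusM M s f g) := by
  obtain ⟨hKne, hKc, hKconv, hFconc⟩ := hf
  obtain ⟨hLne, hLc, hLconv, hGconc⟩ := hg
  set F : En n → ℝ := fun x => f x ^ s⁻¹ with hFdef
  set G : En n → ℝ := fun x => g x ^ s⁻¹ with hGdef
  set K : Set (En n) := fsupp f with hKdef
  set L : Set (En n) := fsupp g with hLdef
  set S : Set (En n) := MAdd M K L with hSdef
  set A : En n → Set ℝ := fun z => {t | ∃ ab ∈ M, ∃ x ∈ K, ∃ y ∈ L,
      z = ab.1 • x + ab.2 • y ∧ t = ab.1 * F x + ab.2 * G y} with hAdef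
  set R : En n → Set ℝ := fun z => {r | ∃ ab ∈ M, ∃ x ∈ K, ∃ y ∈ L,
      z = ab.1 • x + ab.2 • y ∧ r = (ab.1 * F x + ab.2 * G y) ^ s} with hRdef
  have hAmem : ∀ z t, t ∈ A z ↔ ∃ ab ∈ M, ∃ x ∈ K, ∃ y ∈ L,
      z = ab.1 • x + ab.2 • y ∧ t = ab.1 * F x + ab.2 * G y := fun z t => Iff.rfl
  have hRmem : ∀ z r, r ∈ R z ↔ ∃ ab ∈ M, ∃ x ∈ K, ∃ y ∈ L,
      z = ab.1 • x + ab.2 • y ∧ r = (ab.1 * F x + ab.2 * G y) ^ s := fun z r => Iff.rfl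
  have hSmem : ∀ z, z ∈ S ↔ ∃ ab ∈ M, ∃ x ∈ K, ∃ y ∈ L,
      z = ab.1 • x + ab.2 • y := fun z => Iff.rfl
  have hopS : ∀ z, z ∈ S → oplusM M s f g z = sSup (R z) := fun z hz => if_pos hz
  have hop0 : ∀ z, z ∉ S → oplusM M s f g z = 0 := fun z hz => if_neg hz
  have hFnn : ∀ x, 0 ≤ F x := fun x => Real.rpow_nonneg (hf0 x) _
  have hGnn : ∀ x, 0 ≤ G x := fun x => Real.rpow_nonneg (hg0 x) _
  obtain ⟨CF, hCF⟩ := bddAbove_of_concaveOn hKconv hKc hFconc (fun x _ => hFnn x)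
  obtain ⟨CG, hCG⟩ := bddAbove_of_concaveOn hLconv hLc hGconc (fun x _ => hGnn x)
  obtain ⟨CM1, hCM1'⟩ := (hMc.image continuous_fst).bddAbove
  obtain ⟨CM2, hCM2'⟩ := (hMc.image continuous_snd).bddAbove
  have hCM1 : ∀ ab ∈ M, ab.1 ≤ CM1 := fun ab hab => hCM1' (mem_image_of_mem _ hab)
  have hCM2 : ∀ ab ∈ M, ab.2 ≤ CM2 := fun ab hab => hCM2' (mem_image_of_mem _ hab)
  have hAle : ∀ z t, t ∈ A z → t ≤ max CM1 0 * max CF 0 + max CM2 0 * max CG 0 := by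
    rintro z t ⟨ab, hab, x, hx, y, hy, -, rfl⟩
    obtain ⟨h1, h2⟩ := hMpos ab hab
    have e1 : ab.1 * F x ≤ max CM1 0 * max CF 0 :=
      mul_le_mul (le_trans (hCM1 ab hab) (le_max_left _ _))
        (le_trans (hCF x hx) (le_max_left _ _)) (hFnn x) (le_max_right _ _)
    have e2 : ab.2 * G y ≤ max CM2 0 * max CG 0 :=
      mul_le_mul (le_trans (hCM2 ab hab) (le_max_left _ _))
        (le_trans (hCG y hy) (le_max_left _ _)) (hGnn y) (le_max_right _ _)
    linarith
  have hAbdd : ∀ z, BddAbove (A z) := fun z => ⟨_, fun t ht => hAle z t ht⟩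
  have hAnn : ∀ z t, t ∈ A z → 0 ≤ t := by
    rintro z t ⟨ab, hab, x, hx, y, hy, -, rfl⟩
    obtain ⟨h1, h2⟩ := hMpos ab hab
    exact add_nonneg (mul_nonneg h1 (hFnn x)) (mul_nonneg h2 (hGnn y))
  have hRA : ∀ z r, r ∈ R z ↔ ∃ t ∈ A z, r = t ^ s := by
    intro z r
    constructor
    · rintro ⟨ab, hab, x, hx, y, hy, hz, rfl⟩
      exact ⟨_, ⟨ab, hab, x, hx, y, hy, hz, rfl⟩, rfl⟩
    · rintro ⟨t, ⟨ab, hab, x, hx, y, hy, hz, rfl⟩, rfl⟩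
      exact ⟨ab, hab, x, hx, y, hy, hz, rfl⟩
  have hRbdd : ∀ z, BddAbove (R z) := by
    refine fun z => ⟨(max CM1 0 * max CF 0 + max CM2 0 * max CG 0) ^ s, fun r hr => ?_⟩
    rw [hRA] at hr
    obtain ⟨t, ht, rfl⟩ := hr
    exact Real.rpow_le_rpow (hAnn z t ht) (hAle z t ht) hs.le
  have hASne : ∀ z, z ∈ S ↔ (A z).Nonempty := by
    intro z
    constructor
    · rintro ⟨ab, hab, x, hx, y, hy, hz⟩
      exact ⟨_, ⟨ab, hab, x, hx, y, hy, hz, rfl⟩⟩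
    · rintro ⟨t, ⟨ab, hab, x, hx, y, hy, hz, -⟩⟩
      exact ⟨ab, hab, x, hx, y, hy, hz⟩
  have hRneS : ∀ z, z ∈ S → (R z).Nonempty := by
    intro z hz
    obtain ⟨t, ht⟩ := (hASne z).1 hz
    exact ⟨t ^ s, (hRA z _).2 ⟨t, ht, rfl⟩⟩
  have hφnn : ∀ z, z ∈ S → 0 ≤ sSup (A z) := by
    intro z hz
    obtain ⟨t, ht⟩ := (hASne z).1 hz
    exact le_trans (hAnn z t ht) (le_csSup (hAbdd z) ht)
  have hhnn : ∀ z, z ∈ S → 0 ≤ sSup (R z) := by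
    intro z hz
    obtain ⟨t, ht⟩ := (hASne z).1 hz
    exact le_trans (Real.rpow_nonneg (hAnn z t ht) s)
      (le_csSup (hRbdd z) ((hRA z _).2 ⟨t, ht, rfl⟩))
  have hpow : ∀ z, z ∈ S → oplusM M s f g z ^ s⁻¹ = sSup (A z) := by
    intro z hz
    have hAne := (hASne z).1 hz
    have hα : 0 ≤ sSup (A z) := hφnn z hz
    have hβ : 0 ≤ sSup (R z) := hhnn z hz
    have h1 : sSup (R z) ≤ (sSup (A z)) ^ s := by
      refine csSup_le (hRneS z hz) ?_
      intro r hr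
      rw [hRA] at hr
      obtain ⟨t, ht, rfl⟩ := hr
      exact Real.rpow_le_rpow (hAnn z t ht) (le_csSup (hAbdd z) ht) hs.le
    have h2 : sSup (A z) ≤ (sSup (R z)) ^ s⁻¹ := by
      refine csSup_le hAne (fun t ht => ?_)
      have ht0 := hAnn z t ht
      have hle : t ^ s ≤ sSup (R z) := le_csSup (hRbdd z) ((hRA z _).2 ⟨t, ht, rfl⟩)
      calc t = (t ^ s) ^ s⁻¹ := (Real.rpow_rpow_inv ht0 hs.ne').symm
        _ ≤ (sSup (R z)) ^ s⁻¹ :=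
            Real.rpow_le_rpow (Real.rpow_nonneg ht0 s) hle (inv_nonneg.2 hs.le)
    rw [hopS z hz]
    refine le_antisymm ?_ h2
    calc (sSup (R z)) ^ s⁻¹ ≤ ((sSup (A z)) ^ s) ^ s⁻¹ :=
          Real.rpow_le_rpow hβ h1 (inv_nonneg.2 hs.le)
      _ = sSup (A z) := Real.rpow_rpow_inv hα hs.ne'
  -- core construction
  have hcore : ∀ (a b : ℝ) (z1 z2 : En n), 0 ≤ a → 0 ≤ b → a + b = 1 →
      ∀ t1 ∈ A z1, ∀ t2 ∈ A z2, ∃ t ∈ A (a • z1 + b • z2), a * t1 + b * t2 ≤ t := by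
    intro a b z1 z2 ha hb hab t1 ht1 t2 ht2
    rw [hAmem] at ht1 ht2
    obtain ⟨ab1, hab1, x1, hx1, y1, hy1, rfl, rfl⟩ := ht1
    obtain ⟨ab2, hab2, x2, hx2, y2, hy2, rfl, rfl⟩ := ht2
    obtain ⟨h1a, h1b⟩ := hMpos _ hab1
    obtain ⟨h2a, h2b⟩ := hMpos _ hab2
    have habM : ((a * ab1.1 + b * ab2.1, a * ab1.2 + b * ab2.2) : ℝ × ℝ) ∈ M := by
      have h' := hMconv hab1 hab2 ha hb hab
      have he : a • ab1 + b • ab2 =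
          ((a * ab1.1 + b * ab2.1, a * ab1.2 + b * ab2.2) : ℝ × ℝ) := by
        ext <;> simp [smul_eq_mul]
      rwa [he] at h'
    obtain ⟨x, hxK, hxeq, hxF⟩ := combo_aux hFconc hx1 hx2 (mul_nonneg ha h1a) (mul_nonneg hb h2a)
    obtain ⟨y, hyL, hyeq, hyG⟩ := combo_aux hGconc hy1 hy2 (mul_nonneg ha h1b) (mul_nonneg hb h2b)
    refine ⟨(a * ab1.1 + b * ab2.1) * F x + (a * ab1.2 + b * ab2.2) * G y,
      (hAmem _ _).2 ⟨(a * ab1.1 + b * ab2.1, a * ab1.2 + b * ab2.2), habM, x, hxK, y, hyL,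
        ?_, rfl⟩, by nlinarith⟩
    dsimp only
    rw [hxeq, hyeq]
    module
  have hSconv : Convex ℝ S := by
    intro z1 hz1 z2 hz2 a b ha hb hab
    obtain ⟨t1, ht1⟩ := (hASne z1).1 hz1
    obtain ⟨t2, ht2⟩ := (hASne z2).1 hz2
    obtain ⟨t, ht, -⟩ := hcore a b z1 z2 ha hb hab t1 ht1 t2 ht2
    exact (hASne _).2 ⟨t, ht⟩
  have hconcS : ∀ z1, z1 ∈ S → ∀ z2, z2 ∈ S → ∀ a b : ℝ, 0 ≤ a → 0 ≤ b → a + b = 1 →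
      a * sSup (A z1) + b * sSup (A z2) ≤ sSup (A (a • z1 + b • z2)) := by
    intro z1 hz1 z2 hz2 a b ha hb hab
    have hAne1 := (hASne z1).1 hz1
    have hAne2 := (hASne z2).1 hz2
    rcases eq_or_lt_of_le ha with rfl | ha'
    · have hb1 : b = 1 := by linarith
      subst hb1
      simp
    rcases eq_or_lt_of_le hb with rfl | hb'
    · have ha1 : a = 1 := by linarith
      subst ha1
      simp
    have hbd := hAbdd (a • z1 + b • z2)
    have hkey : ∀ t1 ∈ A z1, ∀ t2 ∈ A z2,
        a * t1 + b * t2 ≤ sSup (A (a • z1 + b • z2)) := by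
      intro t1 ht1 t2 ht2
      obtain ⟨t, ht, hle⟩ := hcore a b z1 z2 ha hb hab t1 ht1 t2 ht2
      exact hle.trans (le_csSup hbd ht)
    have h2 : ∀ t1 ∈ A z1,
        sSup (A z2) ≤ (sSup (A (a • z1 + b • z2)) - a * t1) / b := by
      intro t1 ht1
      refine csSup_le hAne2 (fun t2 ht2 => ?_)
      rw [le_div_iff₀ hb']
      linarith [hkey t1 ht1 t2 ht2]
    have h1 : sSup (A z1) ≤ (sSup (A (a • z1 + b • z2)) - b * sSup (A z2)) / a := by
      refine csSup_le hAne1 (fun t1 ht1 => ?_)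
      have := h2 t1 ht1
      rw [le_div_iff₀ hb'] at this
      rw [le_div_iff₀ ha']
      linarith
    rw [le_div_iff₀ ha'] at h1
    linarith
  -- support of the sum function
  have hsubS : support (oplusM M s f g) ⊆ S := by
    intro z hz
    by_contra hn
    exact hz (hop0 z hn)
  have hSimage : S = (fun p : (ℝ × ℝ) × En n × En n => p.1.1 • p.2.1 + p.1.2 • p.2.2) ''
      (M ×ˢ K ×ˢ L) := by
    ext z
    constructor
    · rintro ⟨ab, hab, x, hx, y, hy, rfl⟩
      exact ⟨(ab, x, y), ⟨hab, hx, hy⟩, rfl⟩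
    · rintro ⟨⟨ab, x, y⟩, ⟨hab, hx, hy⟩, rfl⟩
      exact ⟨ab, hab, x, hx, y, hy, rfl⟩
  have hScomp : IsCompact S := by
    rw [hSimage]
    exact (hMc.prod (hKc.prod hLc)).image (by fun_prop)
  have hclsub : fsupp (oplusM M s f g) ⊆ S := closure_minimal hsubS hScomp.isClosed
  have hcomp : IsCompact (fsupp (oplusM M s f g)) :=
    IsCompact.of_isClosed_subset hScomp isClosed_closure hclsub
  -- convexity of support
  have hsuppconv : Convex ℝ (support (oplusM M s f g)) := by
    intro z1 hz1 z2 hz2 a b ha hb hab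
    rcases eq_or_lt_of_le ha with rfl | ha'
    · have hb1 : b = 1 := by linarith
      subst hb1
      simpa using hz2
    rcases eq_or_lt_of_le hb with rfl | hb'
    · have ha1 : a = 1 := by linarith
      subst ha1
      simpa using hz1
    have hz1S : z1 ∈ S := hsubS hz1
    have hz2S : z2 ∈ S := hsubS hz2
    have hztS : a • z1 + b • z2 ∈ S := hSconv hz1S hz2S ha hb hab
    have hle1 : (0:ℝ) ≤ oplusM M s f g z1 := by rw [hopS z1 hz1S]; exact hhnn z1 hz1S
    have hle2 : (0:ℝ) ≤ oplusM M s f g z2 := by rw [hopS z2 hz2S]; exact hhnn z2 hz2S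
    have hp1 : (0:ℝ) < oplusM M s f g z1 := by
      rcases lt_or_eq_of_le hle1 with h | h
      · exact h
      · exact absurd h.symm hz1
    have hp2 : (0:ℝ) < oplusM M s f g z2 := by
      rcases lt_or_eq_of_le hle2 with h | h
      · exact h
      · exact absurd h.symm hz2
    have hφ1 : (0:ℝ) < sSup (A z1) := by
      rw [← hpow z1 hz1S]; exact Real.rpow_pos_of_pos hp1 _
    have hφ2 : (0:ℝ) < sSup (A z2) := by
      rw [← hpow z2 hz2S]; exact Real.rpow_pos_of_pos hp2 _
    have hφt : (0:ℝ) < sSup (A (a • z1 + b • z2)) := by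
      have := hconcS z1 hz1S z2 hz2S a b ha hb hab
      nlinarith
    intro h0
    have := hpow _ hztS
    rw [h0, Real.zero_rpow (inv_ne_zero hs.ne')] at this
    linarith [this ▸ hφt]
  have hconvcl : Convex ℝ (fsupp (oplusM M s f g)) := hsuppconv.closure
  -- nonemptiness
  have hKs : (support f).Nonempty := by
    rcases (support f).eq_empty_or_nonempty with he | hne
    · exfalso
      rw [hKdef, fsupp, he, closure_empty] at hKne
      exact hKne.ne_empty rfl
    · exact hne
  have hLs : (support g).Nonempty := by
    rcases (support g).eq_empty_or_nonempty with he | hne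
    · exfalso
      rw [hLdef, fsupp, he, closure_empty] at hLne
      exact hLne.ne_empty rfl
    · exact hne
  obtain ⟨x0, hx0⟩ := hKs
  obtain ⟨y0, hy0⟩ := hLs
  have hx0K : x0 ∈ K := subset_closure hx0
  have hy0L : y0 ∈ L := subset_closure hy0
  have hfx0 : 0 < f x0 := lt_of_le_of_ne (hf0 x0) (Ne.symm hx0)
  have hgy0 : 0 < g y0 := lt_of_le_of_ne (hg0 y0) (Ne.symm hy0)
  have hFx0 : 0 < F x0 := Real.rpow_pos_of_pos hfx0 _
  have hGy0 : 0 < G y0 := Real.rpow_pos_of_pos hgy0 _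
  obtain ⟨ab0, hab0, hab0ne⟩ : ∃ ab ∈ M, ab ≠ ((0:ℝ), (0:ℝ)) := by
    by_contra hcon
    push_neg at hcon
    apply hM0
    apply Subset.antisymm
    · intro ab hab
      rw [mem_singleton_iff]
      exact hcon ab hab
    · intro ab hab
      rw [mem_singleton_iff] at hab
      obtain ⟨cd, hcd⟩ := hMne
      have := hcon cd hcd
      rw [hab, ← this]
      exact hcd
  obtain ⟨hab0a, hab0b⟩ := hMpos ab0 hab0
  have ht0pos : 0 < ab0.1 * F x0 + ab0.2 * G y0 := by
    rcases lt_or_eq_of_le hab0a with h1 | h1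
    · nlinarith
    rcases lt_or_eq_of_le hab0b with h2 | h2
    · nlinarith
    · exact absurd (Prod.ext h1.symm h2.symm) hab0ne
  have hz0S : ab0.1 • x0 + ab0.2 • y0 ∈ S :=
    (hSmem _).2 ⟨ab0, hab0, x0, hx0K, y0, hy0L, rfl⟩
  have hz0pos : 0 < oplusM M s f g (ab0.1 • x0 + ab0.2 • y0) := by
    rw [hopS _ hz0S]
    refine lt_of_lt_of_le (Real.rpow_pos_of_pos ht0pos s) ?_
    exact le_csSup (hRbdd _) ((hRmem _ _).2 ⟨ab0, hab0, x0, hx0K, y0, hy0L, rfl, rfl⟩)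
  have hfsne : (fsupp (oplusM M s f g)).Nonempty :=
    ⟨_, subset_closure (mem_support.2 (ne_of_gt hz0pos))⟩
  refine ⟨hfsne, hcomp, hconvcl, hconvcl, ?_⟩
  intro z1 hz1 z2 hz2 a b ha hb hab
  have hz1S : z1 ∈ S := hclsub hz1
  have hz2S : z2 ∈ S := hclsub hz2
  have hztS : a • z1 + b • z2 ∈ S := hSconv hz1S hz2S ha hb hab
  show a • (oplusM M s f g z1 ^ s⁻¹) + b • (oplusM M s f g z2 ^ s⁻¹) ≤
    oplusM M s f g (a • z1 + b • z2) ^ s⁻¹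
  simp only [smul_eq_mul]
  rw [hpow z1 hz1S, hpow z2 hz2S, hpow _ hztS]
  exact hconcS z1 hz1S z2 hz2S a b ha hb hab

end
end

section
/- Let p ≥ 1, let s > 0 be an integer, λ > 0, and let g : ℝⁿ → [0,∞) be an s-concave integrable function whose support has nonempty interior and contains the origin. Set f = λ ×_{p,s} g. Then the limit S̃_{p,s}(f; g) = (p/(n+s)) · lim_{ε→0⁺} ( ∫ [f ⊕_{p,s} (ε ×_{p,s} g)] − ∫ f ) / ε exists and equals (∫ f)^{1 − p/(n+s)} (∫ g)^{p/(n+s)} = λ^{(n+s)/p − 1} ∫ g. -/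
open MeasureTheory Set Function
open scoped Classical ENNReal

noncomputable section

/-- the coefficient set `{((1-t)^{1/q}, t^{1/q}) : t ∈ [0,1]}`, where `1/q = 1 - 1/p`. -/
def Mp (p : ℝ) : Set (ℝ × ℝ) :=
  {ab | ∃ t ∈ Icc (0:ℝ) 1, ab = ((1 - t) ^ (1 - p⁻¹), t ^ (1 - p⁻¹))}

/-- the function `f ⊕_{p,s} g`. -/
def oplusP {n : ℕ} (p s : ℝ) (f g : En n → ℝ) : En n → ℝ := oplusM (Mp p) s f g

/-- the `L_p` scaling `[λ ×_{p,s} f](x) = λ^{s/p} f(λ^{-1/p} x)`. -/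
def lpScale {n : ℕ} (p s l : ℝ) (f : En n → ℝ) : En n → ℝ :=
  fun x => l ^ (s / p) * f ((l ^ (-p⁻¹)) • x)

/-! The `L_p` scalings of an `s`-concave `g` whose support is a convex set containing the origin
form a semigroup under `⊕_{p,s}`: `(a ×_{p,s} g) ⊕_{p,s} (b ×_{p,s} g) = (a + b) ×_{p,s} g`.
The upper bound comes from concavity of `g^{1/s}` together with the Hölder-type inequality
`(1-t)^{1/q} a^{1/p} + t^{1/q} b^{1/p} ≤ (a+b)^{1/p}`, which is an equality at `t = b/(a+b)`.
As `∫ λ ×_{p,s} g = λ^{(n+s)/p} ∫ g`, the difference quotient is that of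
`ε ↦ (λ + ε)^{(n+s)/p} ∫ g`, and the limit is its derivative at `0`. -/

open Filter Topology
open scoped Pointwise

theorem rpow_one_sub_mul_rpow_add_le {θ t a b : ℝ} (hθ0 : 0 ≤ θ) (hθ1 : θ ≤ 1)
    (ht0 : 0 ≤ t) (ht1 : t ≤ 1) (ha : 0 < a) (hb : 0 < b) :
    (1 - t) ^ (1 - θ) * a ^ θ + t ^ (1 - θ) * b ^ θ ≤ (a + b) ^ θ := by
  have hab : 0 < a + b := by linarith
  -- weighted AM-GM on each term after normalising `a + b` to `1`
  have amgm : ∀ {u v : ℝ}, 0 ≤ u → 0 ≤ v →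
      (u / (a + b)) ^ θ * v ^ (1 - θ) ≤ θ * (u / (a + b)) + (1 - θ) * v := fun hu hv =>
    Real.geom_mean_le_arith_mean2_weighted hθ0 (by linarith) (by positivity) hv (by ring)
  have split : ∀ {u : ℝ}, 0 ≤ u → u ^ θ = (a + b) ^ θ * (u / (a + b)) ^ θ := fun hu => by
    rw [← Real.mul_rpow hab.le (by positivity), mul_div_cancel₀ _ hab.ne']
  calc (1 - t) ^ (1 - θ) * a ^ θ + t ^ (1 - θ) * b ^ θ
      = (a + b) ^ θ * ((a / (a + b)) ^ θ * (1 - t) ^ (1 - θ)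
          + (b / (a + b)) ^ θ * t ^ (1 - θ)) := by
        rw [split ha.le, split hb.le]; ring
    _ ≤ (a + b) ^ θ * (θ * (a / (a + b)) + (1 - θ) * (1 - t)
          + (θ * (b / (a + b)) + (1 - θ) * t)) := by
        gcongr
        · exact amgm ha.le (by linarith)
        · exact amgm hb.le ht0
    _ = (a + b) ^ θ := by field_simp; ring

theorem rpow_one_sub_mul_rpow_add_eq {θ a b : ℝ} (ha : 0 < a) (hb : 0 < b) :
    (1 - b / (a + b)) ^ (1 - θ) * a ^ θ + (b / (a + b)) ^ (1 - θ) * b ^ θ = (a + b) ^ θ := by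
  have hab : 0 < a + b := by linarith
  have key : ∀ {u : ℝ}, 0 < u → (u / (a + b)) ^ (1 - θ) * u ^ θ = u * (a + b) ^ (θ - 1) :=
    fun hu => by
      rw [Real.div_rpow hu.le hab.le, div_mul_eq_mul_div, ← Real.rpow_add hu, sub_add_cancel,
        Real.rpow_one, ← neg_sub, Real.rpow_neg hab.le, div_inv_eq_mul]
  rw [show 1 - b / (a + b) = a / (a + b) by field_simp; ring, key ha, key hb, ← add_mul,
    Real.rpow_sub_one hab.ne']
  field_simp

section StarShaped

variable {E : Type*} [AddCommGroup E] [Module ℝ E] {K : Set E} {x y : E} {A B c : ℝ}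

private theorem inv_smul_add_smul_eq_sum :
    c⁻¹ • (A • x + B • y) = ∑ i, ![A / c, B / c, 1 - (A + B) / c] i • ![x, y, 0] i := by
  simp [Fin.sum_univ_three, smul_add, smul_smul, div_eq_inv_mul]

private theorem weights_nonneg (hA : 0 ≤ A) (hB : 0 ≤ B) (hc : 0 < c) (hABc : A + B ≤ c) :
    ∀ i ∈ Finset.univ, 0 ≤ ![A / c, B / c, 1 - (A + B) / c] i := by
  have : (A + B) / c ≤ 1 := (div_le_one hc).mpr hABc
  intro i _
  fin_cases i <;> simp <;> first | positivity | linarith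

theorem Convex.inv_smul_add_smul_mem (hK : Convex ℝ K) (h0 : (0 : E) ∈ K) (hx : x ∈ K)
    (hy : y ∈ K) (hA : 0 ≤ A) (hB : 0 ≤ B) (hc : 0 < c) (hABc : A + B ≤ c) :
    c⁻¹ • (A • x + B • y) ∈ K := by
  rw [inv_smul_add_smul_eq_sum]
  refine hK.sum_mem (weights_nonneg hA hB hc hABc) ?_ ?_
  · simp [Fin.sum_univ_three]; ring
  · intro i _; fin_cases i <;> assumption

theorem ConcaveOn.smul_add_smul_le {φ : E → ℝ} (hφ : ConcaveOn ℝ K φ) (h0 : (0 : E) ∈ K)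
    (hφ0 : 0 ≤ φ 0) (hx : x ∈ K) (hy : y ∈ K) (hA : 0 ≤ A) (hB : 0 ≤ B) (hc : 0 < c)
    (hABc : A + B ≤ c) :
    A * φ x + B * φ y ≤ c * φ (c⁻¹ • (A • x + B • y)) := by
  have jensen := hφ.le_map_sum (p := ![x, y, 0]) (weights_nonneg hA hB hc hABc)
    (by simp [Fin.sum_univ_three]; ring) (fun i _ => by fin_cases i <;> assumption)
  rw [← inv_smul_add_smul_eq_sum] at jensen
  simp only [Fin.sum_univ_three, smul_eq_mul, Matrix.cons_val] at jensen
  have hφ0' : 0 ≤ (1 - (A + B) / c) * φ 0 :=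
    mul_nonneg (sub_nonneg.mpr ((div_le_one hc).mpr hABc)) hφ0
  calc A * φ x + B * φ y = c * (A / c * φ x + B / c * φ y) := by field_simp
    _ ≤ c * φ (c⁻¹ • (A • x + B • y)) := by gcongr; linarith

end StarShaped

theorem div_add_mem_Mp {p a b : ℝ} (ha : 0 < a) (hb : 0 < b) :
    ((1 - b / (a + b)) ^ (1 - p⁻¹), (b / (a + b)) ^ (1 - p⁻¹)) ∈ Mp p :=
  ⟨b / (a + b), ⟨by positivity, (div_le_one (by positivity)).mpr (by linarith)⟩, rfl⟩

theorem MAdd_Mp_rpow_smul {E : Type*} [AddCommGroup E] [Module ℝ E] {K : Set E} {p a b : ℝ}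
    (hp : 1 ≤ p) (hK : Convex ℝ K) (h0 : (0 : E) ∈ K) (ha : 0 < a) (hb : 0 < b) :
    MAdd (Mp p) (a ^ p⁻¹ • K) (b ^ p⁻¹ • K) = (a + b) ^ p⁻¹ • K := by
  have hab : 0 < a + b := by linarith
  apply Subset.antisymm
  · rintro _ ⟨_, ⟨t, ⟨ht0, ht1⟩, rfl⟩, _, ⟨x, hx, rfl⟩, _, ⟨y, hy, rfl⟩, rfl⟩
    rw [mem_smul_set_iff_inv_smul_mem₀ (by positivity), smul_smul, smul_smul]
    exact hK.inv_smul_add_smul_mem h0 hx hy (by positivity) (by positivity) (by positivity)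
      (rpow_one_sub_mul_rpow_add_le (by positivity) (inv_le_one_of_one_le₀ hp) ht0 ht1 ha hb)
  · rintro _ ⟨w, hw, rfl⟩
    refine ⟨_, div_add_mem_Mp ha hb, a ^ p⁻¹ • w, smul_mem_smul_set hw,
      b ^ p⁻¹ • w, smul_mem_smul_set hw, ?_⟩
    rw [smul_smul, smul_smul, ← add_smul, rpow_one_sub_mul_rpow_add_eq ha hb]

theorem ConcaveOn.lp_combination_le {E : Type*} [AddCommGroup E] [Module ℝ E] {K : Set E}
    {φ : E → ℝ} {p a b t : ℝ} {x y w : E} (hφ : ConcaveOn ℝ K φ) (h0 : (0 : E) ∈ K)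
    (hφ0 : 0 ≤ φ 0) (hp : 1 ≤ p) (ha : 0 < a) (hb : 0 < b) (ht0 : 0 ≤ t) (ht1 : t ≤ 1)
    (hx : x ∈ K) (hy : y ∈ K)
    (hw : (a + b) ^ p⁻¹ • w =
      ((1 - t) ^ (1 - p⁻¹) * a ^ p⁻¹) • x + (t ^ (1 - p⁻¹) * b ^ p⁻¹) • y) :
    (1 - t) ^ (1 - p⁻¹) * (a ^ p⁻¹ * φ x) + t ^ (1 - p⁻¹) * (b ^ p⁻¹ * φ y)
      ≤ (a + b) ^ p⁻¹ * φ w := by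
  have ht : 0 ≤ (1 - t) ^ (1 - p⁻¹) := Real.rpow_nonneg (by linarith) _
  have key := hφ.smul_add_smul_le h0 hφ0 hx hy (by positivity) (by positivity) (by positivity)
    (rpow_one_sub_mul_rpow_add_le (by positivity) (inv_le_one_of_one_le₀ hp) ht0 ht1 ha hb)
  rw [← hw, inv_smul_smul₀ (by positivity)] at key
  simpa only [mul_assoc] using key

theorem fsupp_lpScale {n : ℕ} {p s a : ℝ} (ha : 0 < a) (g : En n → ℝ) :
    fsupp (lpScale p s a g) = a ^ p⁻¹ • fsupp g := by
  have hsupp : support (lpScale p s a g) = a ^ p⁻¹ • support g := by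
    ext x
    rw [mem_smul_set_iff_inv_smul_mem₀ (by positivity), ← Real.rpow_neg ha.le]
    simp [lpScale, (Real.rpow_pos_of_pos ha _).ne']
  rw [fsupp, hsupp, closure_smul₀]
  rfl

theorem lpScale_rpow_smul {n : ℕ} {p s c : ℝ} (hc : 0 < c) (g : En n → ℝ) (x : En n) :
    lpScale p s c g (c ^ p⁻¹ • x) = c ^ (s / p) * g x := by
  rw [lpScale, smul_smul, ← Real.rpow_add hc, neg_add_cancel, Real.rpow_zero, one_smul]

theorem lpScale_rpow_smul_rpow_inv {n : ℕ} {p s c : ℝ} (hs : s ≠ 0) (hc : 0 < c)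
    {g : En n → ℝ} {x : En n} (hgx : 0 ≤ g x) :
    lpScale p s c g (c ^ p⁻¹ • x) ^ s⁻¹ = c ^ p⁻¹ * g x ^ s⁻¹ := by
  rw [lpScale_rpow_smul hc, Real.mul_rpow (by positivity) hgx, ← Real.rpow_mul hc.le]
  field_simp

theorem oplusP_lpScale_lpScale {n : ℕ} {p s a b : ℝ} (hp : 1 ≤ p) (hs : 0 < s) {g : En n → ℝ}
    (hg0 : ∀ x, 0 ≤ g x) (hgconc : IsSConcave s g) (hgo : (0 : En n) ∈ fsupp g)
    (ha : 0 < a) (hb : 0 < b) :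
    oplusP p s (lpScale p s a g) (lpScale p s b g) = lpScale p s (a + b) g := by
  obtain ⟨-, -, hK, hφ⟩ := hgconc
  have hab : 0 < a + b := by linarith
  funext z
  simp only [oplusP, oplusM]
  rw [fsupp_lpScale ha, fsupp_lpScale hb, MAdd_Mp_rpow_smul hp hK hgo ha hb]
  split_ifs with hz
  · obtain ⟨w, hw, rfl⟩ := hz
    have hv : lpScale p s (a + b) g ((a + b) ^ p⁻¹ • w) = ((a + b) ^ p⁻¹ * g w ^ s⁻¹) ^ s := by
      rw [← lpScale_rpow_smul_rpow_inv hs.ne' hab (hg0 w), Real.rpow_inv_rpow _ hs.ne']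
      exact (lpScale_rpow_smul hab g w).symm ▸ mul_nonneg (by positivity) (hg0 w)
    refine IsGreatest.csSup_eq ⟨?_, ?_⟩
    · refine ⟨_, div_add_mem_Mp ha hb, a ^ p⁻¹ • w, smul_mem_smul_set hw,
        b ^ p⁻¹ • w, smul_mem_smul_set hw, ?_, ?_⟩
      · rw [smul_smul, smul_smul, ← add_smul, rpow_one_sub_mul_rpow_add_eq ha hb]
      · rw [hv, lpScale_rpow_smul_rpow_inv hs.ne' ha (hg0 w),
          lpScale_rpow_smul_rpow_inv hs.ne' hb (hg0 w), ← rpow_one_sub_mul_rpow_add_eq ha hb]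
        ring_nf
    · rintro _ ⟨_, ⟨t, ⟨ht0, ht1⟩, rfl⟩, _, ⟨x, hx, rfl⟩, _, ⟨y, hy, rfl⟩, hzw, rfl⟩
      rw [hv, lpScale_rpow_smul_rpow_inv hs.ne' ha (hg0 x),
        lpScale_rpow_smul_rpow_inv hs.ne' hb (hg0 y)]
      rw [smul_smul, smul_smul] at hzw
      have ht : 0 ≤ (1 - t) ^ (1 - p⁻¹) := Real.rpow_nonneg (by linarith) _
      have hφx := Real.rpow_nonneg (hg0 x) s⁻¹
      have hφy := Real.rpow_nonneg (hg0 y) s⁻¹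
      exact Real.rpow_le_rpow (by positivity) (hφ.lp_combination_le hgo
        (Real.rpow_nonneg (hg0 0) _) hp ha hb ht0 ht1 hx hy hzw) hs.le
  · rw [mem_smul_set_iff_inv_smul_mem₀ (by positivity)] at hz
    rw [lpScale, Real.rpow_neg hab.le, image_eq_zero_of_notMem_tsupport hz, mul_zero]

theorem integral_lpScale {n : ℕ} (p s : ℝ) {a : ℝ} (ha : 0 < a) (g : En n → ℝ) :
    ∫ x, lpScale p s a g x = a ^ ((n + s) / p) * ∫ x, g x := by
  simp only [lpScale]
  rw [integral_const_mul, Measure.integral_comp_smul_of_nonneg volume g (a ^ (-p⁻¹))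
      (hR := by positivity), finrank_euclideanSpace_fin, smul_eq_mul, ← mul_assoc,
    ← Real.rpow_natCast, ← Real.rpow_mul ha.le, ← Real.rpow_neg ha.le, ← Real.rpow_add ha]
  ring_nf

theorem tendsto_rpow_add_mul_sub_div {l γ : ℝ} (hl : 0 < l) (G : ℝ) :
    Tendsto (fun ε => ((l + ε) ^ γ * G - l ^ γ * G) / ε) (𝓝[>] 0) (𝓝 (γ * l ^ (γ - 1) * G)) := by
  have hderiv : HasDerivAt (fun x => x ^ γ * G) (γ * l ^ (γ - 1) * G) l :=
    (Real.hasDerivAt_rpow_const (Or.inl hl.ne')).mul_const G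
  simpa only [smul_eq_mul, inv_mul_eq_div] using hderiv.tendsto_slope_zero_right

theorem rpow_sub_one_mul_eq {l γ G : ℝ} (hl : 0 < l) (hγ : γ ≠ 0) (hG : 0 ≤ G) :
    l ^ (γ - 1) * G = (l ^ γ * G) ^ (1 - γ⁻¹) * G ^ γ⁻¹ := by
  rcases hG.eq_or_lt with rfl | hG
  · simp [Real.zero_rpow (inv_ne_zero hγ)]
  rw [Real.mul_rpow (by positivity) hG.le, mul_assoc, ← Real.rpow_add hG, sub_add_cancel,
    Real.rpow_one, ← Real.rpow_mul hl.le, mul_one_sub, mul_inv_cancel₀ hγ]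

theorem functional_lp_minkowski_equality_general {n : ℕ} (p : ℝ) (s : ℕ) (l : ℝ)
    (hp : 1 ≤ p) (hs : 0 < s) (hl : 0 < l)
    (g : En n → ℝ) (hg0 : ∀ x, 0 ≤ g x)
    (hgconc : IsSConcave (s : ℝ) g)
    (hgo : (0 : En n) ∈ fsupp g)
    (f : En n → ℝ) (hf : f = lpScale p (s : ℝ) l g) :
    ∃ L : ℝ,
      Filter.Tendsto
        (fun ε : ℝ => ((∫ z, oplusP p (s : ℝ) f (lpScale p (s : ℝ) ε g) z) - ∫ x, f x) / ε)
        (nhdsWithin 0 (Set.Ioi 0)) (nhds L) ∧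
      (p / ((n : ℝ) + (s : ℝ))) * L
        = (∫ x, f x) ^ (1 - p / ((n : ℝ) + (s : ℝ))) * (∫ x, g x) ^ (p / ((n : ℝ) + (s : ℝ))) ∧
      (p / ((n : ℝ) + (s : ℝ))) * L = l ^ (((n : ℝ) + (s : ℝ)) / p - 1) * ∫ x, g x := by
  set γ := ((n : ℝ) + s) / p
  have hγ : γ ≠ 0 := by positivity
  have hpγ : p / ((n : ℝ) + s) = γ⁻¹ := (inv_div _ _).symm
  have hf_int : ∫ x, f x = l ^ γ * ∫ x, g x := by rw [hf, integral_lpScale _ _ hl]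
  have hsum_int : ∀ ε > 0, ∫ z, oplusP p s f (lpScale p s ε g) z = (l + ε) ^ γ * ∫ x, g x :=
    fun ε hε => by
      rw [hf, oplusP_lpScale_lpScale hp (by positivity) hg0 hgconc hgo hl hε,
        integral_lpScale _ _ (by positivity)]
  refine ⟨γ * l ^ (γ - 1) * ∫ x, g x, ?_, ?_, ?_⟩
  · refine (tendsto_rpow_add_mul_sub_div hl _).congr' ?_
    filter_upwards [self_mem_nhdsWithin] with ε (hε : 0 < ε)
    rw [hsum_int ε hε, hf_int]
  · rw [hpγ, mul_assoc, inv_mul_cancel_left₀ hγ, hf_int,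
      rpow_sub_one_mul_eq hl hγ (integral_nonneg hg0)]
  · rw [hpγ, mul_assoc, inv_mul_cancel_left₀ hγ]

/-- Equality case of the functional `L_p` Minkowski inequality: for `s`-concave `g`
with support having nonempty interior and containing the origin, and `f = λ ×_{p,s} g`,
the limit defining `S̃_{p,s}(f;g)` exists and
`S̃_{p,s}(f;g) = (∫f)^{1-p/(n+s)} (∫g)^{p/(n+s)} = λ^{(n+s)/p - 1} ∫ g`. -/
theorem functional_lp_minkowski_equality {n : ℕ} (p : ℝ) (s : ℕ) (l : ℝ)
    (hp : 1 ≤ p) (hs : 0 < s) (hl : 0 < l)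
    (g : En n → ℝ) (hg0 : ∀ x, 0 ≤ g x) (hgi : MeasureTheory.Integrable g)
    (hgconc : IsSConcave (s : ℝ) g)
    (hgint : (interior (fsupp g)).Nonempty) (hgo : (0 : En n) ∈ fsupp g)
    (f : En n → ℝ) (hf : f = lpScale p (s : ℝ) l g) :
    ∃ L : ℝ,
      Filter.Tendsto
        (fun ε : ℝ => ((∫ z, oplusP p (s : ℝ) f (lpScale p (s : ℝ) ε g) z) - ∫ x, f x) / ε)
        (nhdsWithin 0 (Set.Ioi 0)) (nhds L) ∧
      (p / ((n : ℝ) + (s : ℝ))) * L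
        = (∫ x, f x) ^ (1 - p / ((n : ℝ) + (s : ℝ))) * (∫ x, g x) ^ (p / ((n : ℝ) + (s : ℝ))) ∧
      (p / ((n : ℝ) + (s : ℝ))) * L = l ^ (((n : ℝ) + (s : ℝ)) / p - 1) * ∫ x, g x :=
  functional_lp_minkowski_equality_general p s l hp hs hl g hg0 hgconc hgo f hf

end
end

section
/- Let p ≥ 1 with Hölder conjugate q, s > 0, and let f, g : ℝⁿ → [0,∞) be s-concave functions whose supports both contain the origin. Then f ⊕_{p,s} g is s-concave and its support contains the origin. -/
open MeasureTheory Set Function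
open scoped Classical ENNReal

noncomputable section

/-!
Write `F = f ^ (1/s)`, `G = g ^ (1/s)` and `M = Mp p`. Then `(f ⊕_{p,s} g) ^ (1/s)` at `z` is the
supremum of `a F x + b G y` over all representations `z = a x + b y` with `(a, b) ∈ M`, and this
supremum is concave in `z` for two reasons. First, every convex combination of two points of `M`
is dominated coordinatewise by a point of `M`: take the same convex combination of the
parameters `t` and use concavity of `t ↦ t ^ (1/q)`. Second, if `F ≥ 0` is concave on a convex
set `K ∋ 0` and `a, b ≥ 0`, `a + b ≤ c`, then `a x + b y = c z` for some `z ∈ K` with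
`a F x + b F y ≤ c F z`. The suprema are finite because a nonnegative concave function on a
bounded convex set in finite dimension is bounded above: a point of the intrinsic interior
controls every value.
-/

section ConcaveBound

variable {E : Type*} [NormedAddCommGroup E] [NormedSpace ℝ E]

theorem exists_pos_forall_add_smul_sub_mem {K : Set E} (hK : Bornology.IsBounded K) {c : E}
    (hc : c ∈ intrinsicInterior ℝ K) : ∃ δ : ℝ, 0 < δ ∧ ∀ x ∈ K, c + δ • (c - x) ∈ K := by
  obtain ⟨c', hc', rfl⟩ := mem_intrinsicInterior.1 hc
  obtain ⟨ε, hε, hball⟩ := Metric.isOpen_iff.1 isOpen_interior c' hc'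
  obtain ⟨R, hR⟩ := hK.subset_closedBall (c' : E)
  set δ := ε / (2 * (max R 0 + 1))
  have hδ : 0 < δ := by positivity
  refine ⟨δ, hδ, fun x hx => ?_⟩
  have hspan : (c' : E) + δ • ((c' : E) - x) ∈ affineSpan ℝ K := by
    rw [add_comm]
    exact AffineSubspace.smul_vsub_vadd_mem _ δ c'.2 (subset_affineSpan ℝ K hx) c'.2
  have hdist : dist (⟨_, hspan⟩ : affineSpan ℝ K) c' < ε := by
    have hxR : ‖(c' : E) - x‖ ≤ max R 0 := by
      rw [← dist_eq_norm, dist_comm]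
      exact (Metric.mem_closedBall.1 (hR hx)).trans (le_max_left R 0)
    rw [Subtype.dist_eq, dist_eq_norm, add_sub_cancel_left, norm_smul, Real.norm_of_nonneg hδ.le]
    calc δ * ‖(c' : E) - x‖ ≤ δ * max R 0 := by gcongr
      _ < ε := by
        rw [div_mul_eq_mul_div, div_lt_iff₀ (by positivity)]
        nlinarith [le_max_right R 0]
  exact (interior_subset (hball hdist) : _ ∈ Subtype.val ⁻¹' K)

theorem ConcaveOn.bddAbove_image_of_nonneg [FiniteDimensional ℝ E] {K : Set E} {F : E → ℝ}
    (hF : ConcaveOn ℝ K F) (hK : Bornology.IsBounded K) (hF0 : ∀ x ∈ K, 0 ≤ F x) :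
    BddAbove (F '' K) := by
  rcases K.eq_empty_or_nonempty with rfl | hne
  · simp
  obtain ⟨c, hc⟩ := hne.intrinsicInterior hF.1
  obtain ⟨δ, hδ, hδK⟩ := exists_pos_forall_add_smul_sub_mem hK hc
  refine ⟨(1 + δ) / δ * F c, forall_mem_image.2 fun x hx => ?_⟩
  have hw := hδK x hx
  have hc_eq : (1 + δ)⁻¹ • (c + δ • (c - x)) + (δ / (1 + δ)) • x = c := by
    match_scalars <;> field_simp; ring
  have hjensen := hF.2 hw hx (show (0:ℝ) ≤ (1 + δ)⁻¹ by positivity)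
    (show (0:ℝ) ≤ δ / (1 + δ) by positivity) (by field_simp)
  rw [hc_eq, smul_eq_mul, smul_eq_mul] at hjensen
  have hδx : δ * F x ≤ (1 + δ) * F c := by
    field_simp at hjensen
    linarith [hF0 _ hw]
  rw [div_mul_eq_mul_div, le_div_iff₀ hδ]
  linarith

end ConcaveBound

section StarShaped

variable {E : Type*} [AddCommGroup E] [Module ℝ E] {K : Set E} {F : E → ℝ}

theorem ConcaveOn.smul_mem_and_le_map_smul (hF : ConcaveOn ℝ K F) (h0 : (0 : E) ∈ K)
    (hF0 : 0 ≤ F 0) {t : ℝ} (ht₀ : 0 ≤ t) (ht₁ : t ≤ 1) {x : E} (hx : x ∈ K) :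
    t • x ∈ K ∧ t * F x ≤ F (t • x) := by
  have hcombo : t • x + (1 - t) • (0 : E) = t • x := by simp
  have hmem := hF.1 hx h0 ht₀ (sub_nonneg.2 ht₁) (add_sub_cancel t 1)
  have hle := hF.2 hx h0 ht₀ (sub_nonneg.2 ht₁) (add_sub_cancel t 1)
  rw [hcombo] at hmem hle
  exact ⟨hmem, by simp only [smul_eq_mul] at hle; nlinarith⟩

theorem ConcaveOn.exists_smul_eq_add_and_le (hF : ConcaveOn ℝ K F) (h0 : (0 : E) ∈ K)
    (hF0 : 0 ≤ F 0) {a b c : ℝ} (ha : 0 ≤ a) (hb : 0 ≤ b) (habc : a + b ≤ c) {x y : E}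
    (hx : x ∈ K) (hy : y ∈ K) :
    ∃ z ∈ K, c • z = a • x + b • y ∧ a * F x + b * F y ≤ c * F z := by
  rcases (add_nonneg ha hb).eq_or_lt with hab | hab
  · obtain ⟨rfl, rfl⟩ : a = 0 ∧ b = 0 := ⟨by linarith, by linarith⟩
    exact ⟨0, h0, by simp, by simpa using mul_nonneg (hab.le.trans habc) hF0⟩
  set m := (a / (a + b)) • x + (b / (a + b)) • y
  have hm : m ∈ K := hF.1 hx hy (by positivity) (by positivity) (by field_simp)
  have hFm := hF.2 hx hy (show 0 ≤ a / (a + b) by positivity)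
    (show 0 ≤ b / (a + b) by positivity) (by field_simp)
  have hc : 0 < c := hab.trans_le habc
  obtain ⟨hz, hFz⟩ := hF.smul_mem_and_le_map_smul h0 hF0 (t := (a + b) / c) (by positivity)
    ((div_le_one hc).2 habc) hm
  refine ⟨((a + b) / c) • m, hz, ?_, ?_⟩
  · simp only [m, smul_add, smul_smul]
    congr 2 <;> field_simp
  · simp only [smul_eq_mul] at hFm
    calc a * F x + b * F y = (a + b) * (a / (a + b) * F x + b / (a + b) * F y) := by
          field_simp
      _ ≤ (a + b) * F m := by gcongr
      _ = c * ((a + b) / c * F m) := by field_simp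
      _ ≤ c * F (((a + b) / c) • m) := by gcongr

end StarShaped

theorem concaveOn_csSup_of_forall_exists_le {E : Type*} [AddCommGroup E] [Module ℝ E]
    {S : E → Set ℝ} (hbdd : ∀ z, BddAbove (S z))
    (hS : ∀ ⦃z₁ z₂ r₁ r₂ a b⦄, r₁ ∈ S z₁ → r₂ ∈ S z₂ → 0 ≤ a → 0 ≤ b → a + b = 1 →
      ∃ r ∈ S (a • z₁ + b • z₂), a * r₁ + b * r₂ ≤ r) :
    ConcaveOn ℝ {z | (S z).Nonempty} fun z => sSup (S z) := by
  refine ⟨fun z₁ ⟨r₁, hr₁⟩ z₂ ⟨r₂, hr₂⟩ a b ha hb hab => ?_, ?_⟩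
  · obtain ⟨r, hr, -⟩ := hS hr₁ hr₂ ha hb hab
    exact ⟨r, hr⟩
  intro z₁ hz₁ z₂ hz₂ a b ha hb hab
  rw [smul_eq_mul, smul_eq_mul, ← smul_eq_mul, ← smul_eq_mul (a := b),
    ← Real.sSup_smul_of_nonneg ha, ← Real.sSup_smul_of_nonneg hb,
    ← csSup_add (hz₁.smul_set) ((hbdd z₁).smul_of_nonneg ha) hz₂.smul_set
      ((hbdd z₂).smul_of_nonneg hb)]
  refine csSup_le (hz₁.smul_set.add hz₂.smul_set) ?_
  rintro _ ⟨_, ⟨r₁, hr₁, rfl⟩, _, ⟨r₂, hr₂, rfl⟩, rfl⟩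
  obtain ⟨r, hr, hle⟩ := hS hr₁ hr₂ ha hb hab
  exact hle.trans (le_csSup (hbdd _) hr)

theorem Real.sSup_image_rpow {A : Set ℝ} (hA : ∀ r ∈ A, 0 ≤ r) (hbdd : BddAbove A) {s : ℝ}
    (hs : 0 < s) : sSup ((· ^ s) '' A) = sSup A ^ s := by
  rcases A.eq_empty_or_nonempty with rfl | hne
  · simp [Real.zero_rpow hs.ne']
  exact (MonotoneOn.map_csSup_of_continuousWithinAt
    (Real.continuous_rpow_const hs.le).continuousWithinAt
    (fun u hu _ _ huv => Real.rpow_le_rpow (hA u hu) huv hs.le) hne hbdd).symm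

section MAddition

variable {E : Type*} [AddCommGroup E] [Module ℝ E] {M : Set (ℝ × ℝ)} {K L : Set E}
  {F G : E → ℝ}

def mAddValues (M : Set (ℝ × ℝ)) (K L : Set E) (F G : E → ℝ) (z : E) : Set ℝ :=
  {r | ∃ ab ∈ M, ∃ x ∈ K, ∃ y ∈ L, z = ab.1 • x + ab.2 • y ∧ r = ab.1 * F x + ab.2 * G y}

theorem mAddValues_nonempty_iff {z : E} :
    (mAddValues M K L F G z).Nonempty ↔ z ∈ MAdd M K L := by
  constructor
  · rintro ⟨_, ab, hab, x, hx, y, hy, hz, -⟩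
    exact ⟨ab, hab, x, hx, y, hy, hz⟩
  · rintro ⟨ab, hab, x, hx, y, hy, hz⟩
    exact ⟨_, ab, hab, x, hx, y, hy, hz, rfl⟩

theorem nonneg_of_mem_mAddValues (hM : ∀ ab ∈ M, 0 ≤ ab) (hF : ∀ x ∈ K, 0 ≤ F x)
    (hG : ∀ y ∈ L, 0 ≤ G y) {z : E} : ∀ r ∈ mAddValues M K L F G z, 0 ≤ r := by
  rintro _ ⟨ab, hab, x, hx, y, hy, -, rfl⟩
  have := hM ab hab
  exact add_nonneg (mul_nonneg this.1 (hF x hx)) (mul_nonneg this.2 (hG y hy))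

theorem bddAbove_mAddValues (hM₀ : ∀ ab ∈ M, 0 ≤ ab) (hM : BddAbove M)
    (hF₀ : ∀ x ∈ K, 0 ≤ F x) (hF : BddAbove (F '' K)) (hG₀ : ∀ y ∈ L, 0 ≤ G y)
    (hG : BddAbove (G '' L)) (z : E) : BddAbove (mAddValues M K L F G z) := by
  obtain ⟨A, hA⟩ := hM
  obtain ⟨BF, hBF⟩ := hF
  obtain ⟨BG, hBG⟩ := hG
  refine ⟨A.1 * BF + A.2 * BG, ?_⟩
  rintro _ ⟨ab, hab, x, hx, y, hy, -, rfl⟩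
  have hab₀ := hM₀ ab hab
  have habA := hA hab
  exact add_le_add
    (mul_le_mul habA.1 (hBF (mem_image_of_mem F hx)) (hF₀ x hx) (hab₀.1.trans habA.1))
    (mul_le_mul habA.2 (hBG (mem_image_of_mem G hy)) (hG₀ y hy) (hab₀.2.trans habA.2))

theorem exists_mem_mAddValues_le (hM₀ : ∀ ab ∈ M, 0 ≤ ab)
    (hM : ∀ m₁ ∈ M, ∀ m₂ ∈ M, segment ℝ m₁ m₂ ⊆ lowerClosure M)
    (hF : ConcaveOn ℝ K F) (hK : (0 : E) ∈ K) (hF₀ : 0 ≤ F 0)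
    (hG : ConcaveOn ℝ L G) (hL : (0 : E) ∈ L) (hG₀ : 0 ≤ G 0)
    {z₁ z₂ : E} {r₁ r₂ a b : ℝ} (hr₁ : r₁ ∈ mAddValues M K L F G z₁)
    (hr₂ : r₂ ∈ mAddValues M K L F G z₂) (ha : 0 ≤ a) (hb : 0 ≤ b) (hab : a + b = 1) :
    ∃ r ∈ mAddValues M K L F G (a • z₁ + b • z₂), a * r₁ + b * r₂ ≤ r := by
  obtain ⟨m₁, hm₁, x₁, hx₁, y₁, hy₁, rfl, rfl⟩ := hr₁
  obtain ⟨m₂, hm₂, x₂, hx₂, y₂, hy₂, rfl, rfl⟩ := hr₂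
  obtain ⟨m, hm, hle⟩ := hM m₁ hm₁ m₂ hm₂ ⟨a, b, ha, hb, hab, rfl⟩
  obtain ⟨x, hx, hxeq, hFx⟩ := hF.exists_smul_eq_add_and_le hK hF₀
    (mul_nonneg ha (hM₀ m₁ hm₁).1) (mul_nonneg hb (hM₀ m₂ hm₂).1) hle.1 hx₁ hx₂
  obtain ⟨y, hy, hyeq, hGy⟩ := hG.exists_smul_eq_add_and_le hL hG₀
    (mul_nonneg ha (hM₀ m₁ hm₁).2) (mul_nonneg hb (hM₀ m₂ hm₂).2) hle.2 hy₁ hy₂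
  refine ⟨_, ⟨m, hm, x, hx, y, hy, ?_, rfl⟩, ?_⟩
  · rw [hxeq, hyeq]
    module
  · calc _ = (a * m₁.1 * F x₁ + b * m₂.1 * F x₂) + (a * m₁.2 * G y₁ + b * m₂.2 * G y₂) := by
          ring
      _ ≤ _ := add_le_add hFx hGy

end MAddition

theorem isCompact_MAdd {E : Type*} [AddCommGroup E] [Module ℝ E] [TopologicalSpace E]
    [ContinuousAdd E] [ContinuousSMul ℝ E] {M : Set (ℝ × ℝ)} {K L : Set E} (hM : IsCompact M)
    (hK : IsCompact K) (hL : IsCompact L) : IsCompact (MAdd M K L) := by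
  convert (hM.prod (hK.prod hL)).image
    ((continuous_fst.fst.smul continuous_snd.fst).add
      (continuous_fst.snd.smul continuous_snd.snd)) using 1
  ext z
  constructor
  · rintro ⟨ab, hab, x, hx, y, hy, rfl⟩
    exact ⟨⟨ab, x, y⟩, ⟨hab, hx, hy⟩, rfl⟩
  · rintro ⟨⟨ab, x, y⟩, ⟨hab, hx, hy⟩, rfl⟩
    exact ⟨ab, hab, x, hx, y, hy, rfl⟩

section SConcave

variable {n : ℕ} {s : ℝ}

theorem isSConcave_csSup_rpow {S : En n → Set ℝ} (hs : 0 < s) (hS₀ : ∀ z, ∀ r ∈ S z, 0 ≤ r)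
    (hbdd : ∀ z, BddAbove (S z))
    (hS : ∀ ⦃z₁ z₂ r₁ r₂ a b⦄, r₁ ∈ S z₁ → r₂ ∈ S z₂ → 0 ≤ a → 0 ≤ b → a + b = 1 →
      ∃ r ∈ S (a • z₁ + b • z₂), a * r₁ + b * r₂ ≤ r)
    (hcpt : IsCompact {z | (S z).Nonempty}) (hne : (fsupp fun z => sSup (S z) ^ s).Nonempty) :
    IsSConcave s fun z => sSup (S z) ^ s := by
  have hconc := concaveOn_csSup_of_forall_exists_le hbdd hS
  have hsupp : support (fun z => sSup (S z) ^ s) =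
      {z | z ∈ {z | (S z).Nonempty} ∧ 0 < sSup (S z)} := by
    ext z
    refine ⟨fun hz => ?_, fun ⟨_, hpos⟩ => (Real.rpow_pos_of_pos hpos s).ne'⟩
    have hpos : 0 < sSup (S z) := (Real.sSup_nonneg (hS₀ z)).lt_of_ne' fun h0 =>
      hz (by simp only [h0, Real.zero_rpow hs.ne'])
    refine ⟨nonempty_iff_ne_empty.2 fun he => ?_, hpos⟩
    rw [he, Real.sSup_empty] at hpos
    exact hpos.false
  have hconv : Convex ℝ (fsupp fun z => sSup (S z) ^ s) := by
    rw [fsupp, hsupp]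
    exact (hconc.convex_gt 0).closure
  have hsub : fsupp (fun z => sSup (S z) ^ s) ⊆ {z | (S z).Nonempty} :=
    closure_minimal (hsupp ▸ fun z hz => hz.1) hcpt.isClosed
  refine ⟨hne, hcpt.of_isClosed_subset isClosed_closure hsub, hconv,
    (hconc.subset hsub hconv).congr fun z _ => ?_⟩
  rw [Real.rpow_rpow_inv (Real.sSup_nonneg (hS₀ z)) hs.ne']

end SConcave

section OplusM

variable {n : ℕ} {M : Set (ℝ × ℝ)} {s : ℝ} {f g : En n → ℝ}

-- Also off `MAdd`, where the value set is empty and `sSup ∅ = 0` matches the `else 0` branch.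
theorem oplusM_eq_csSup_rpow (hs : 0 < s) (hM₀ : ∀ ab ∈ M, 0 ≤ ab) (hf₀ : ∀ x, 0 ≤ f x)
    (hg₀ : ∀ x, 0 ≤ g x)
    (hbdd : ∀ z, BddAbove (mAddValues M (fsupp f) (fsupp g) (f · ^ s⁻¹) (g · ^ s⁻¹) z)) :
    oplusM M s f g =
      fun z => sSup (mAddValues M (fsupp f) (fsupp g) (f · ^ s⁻¹) (g · ^ s⁻¹) z) ^ s := by
  ext z
  rw [oplusM]
  split_ifs with hz
  · rw [← Real.sSup_image_rpow (nonneg_of_mem_mAddValues hM₀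
      (fun x _ => Real.rpow_nonneg (hf₀ x) _) (fun y _ => Real.rpow_nonneg (hg₀ y) _)) (hbdd z) hs]
    congr 1
    ext r
    constructor
    · rintro ⟨ab, hab, x, hx, y, hy, hz, rfl⟩
      exact ⟨_, ⟨ab, hab, x, hx, y, hy, hz, rfl⟩, rfl⟩
    · rintro ⟨_, ⟨ab, hab, x, hx, y, hy, hz, rfl⟩, rfl⟩
      exact ⟨ab, hab, x, hx, y, hy, hz, rfl⟩
  · rw [not_nonempty_iff_eq_empty.1 (mt mAddValues_nonempty_iff.1 hz), Real.sSup_empty,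
      Real.zero_rpow hs.ne']

theorem oplusM_isSConcave (hMc : IsCompact M) (hM₀ : ∀ ab ∈ M, 0 ≤ ab)
    (hM : ∀ m₁ ∈ M, ∀ m₂ ∈ M, segment ℝ m₁ m₂ ⊆ lowerClosure M) (hM₁ : ∃ b, ((1 : ℝ), b) ∈ M)
    (hs : 0 < s) (hf₀ : ∀ x, 0 ≤ f x) (hg₀ : ∀ x, 0 ≤ g x) (hf : IsSConcave s f)
    (hg : IsSConcave s g) (hfo : (0 : En n) ∈ fsupp f) (hgo : (0 : En n) ∈ fsupp g) :
    IsSConcave s (oplusM M s f g) ∧ (0 : En n) ∈ fsupp (oplusM M s f g) := by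
  obtain ⟨-, hfc, -, hfconc⟩ := hf
  obtain ⟨-, hgc, -, hgconc⟩ := hg
  set S := mAddValues M (fsupp f) (fsupp g) (f · ^ s⁻¹) (g · ^ s⁻¹)
  have hF₀ : ∀ x, 0 ≤ f x ^ s⁻¹ := fun x => Real.rpow_nonneg (hf₀ x) _
  have hG₀ : ∀ y, 0 ≤ g y ^ s⁻¹ := fun y => Real.rpow_nonneg (hg₀ y) _
  have hbdd : ∀ z, BddAbove (S z) := bddAbove_mAddValues hM₀ hMc.isBounded.bddAbove
    (fun x _ => hF₀ x) (hfconc.bddAbove_image_of_nonneg hfc.isBounded fun x _ => hF₀ x)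
    (fun y _ => hG₀ y) (hgconc.bddAbove_image_of_nonneg hgc.isBounded fun y _ => hG₀ y)
  rw [oplusM_eq_csSup_rpow hs hM₀ hf₀ hg₀ hbdd]
  have hsupp : support f ⊆ support fun z => sSup (S z) ^ s := by
    intro x hx
    obtain ⟨b, hb⟩ := hM₁
    have hmem : f x ^ s⁻¹ + b * g 0 ^ s⁻¹ ∈ S x :=
      ⟨(1, b), hb, x, subset_closure hx, 0, hgo, by simp, by simp⟩
    have hpos : 0 < f x ^ s⁻¹ := Real.rpow_pos_of_pos ((hf₀ x).lt_of_ne' hx) _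
    have hb₀ : 0 ≤ b * g 0 ^ s⁻¹ := mul_nonneg (hM₀ _ hb).2 (hG₀ 0)
    exact (Real.rpow_pos_of_pos (by linarith [le_csSup (hbdd x) hmem]) s).ne'
  have h0 : (0 : En n) ∈ fsupp fun z => sSup (S z) ^ s := closure_mono hsupp hfo
  refine ⟨isSConcave_csSup_rpow hs (fun z => nonneg_of_mem_mAddValues hM₀ (fun x _ => hF₀ x)
    (fun y _ => hG₀ y)) hbdd (fun _ _ _ _ _ _ hr₁ hr₂ ha hb hab =>
      exists_mem_mAddValues_le hM₀ hM hfconc hfo (hF₀ 0) hgconc hgo (hG₀ 0) hr₁ hr₂ ha hb hab)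
    ?_ ⟨0, h0⟩, h0⟩
  simp_rw [mAddValues_nonempty_iff]
  exact isCompact_MAdd hMc hfc hgc

end OplusM

section Mp

variable {p : ℝ}

theorem nonneg_of_mem_Mp {ab : ℝ × ℝ} (hab : ab ∈ Mp p) : 0 ≤ ab := by
  obtain ⟨t, ⟨ht₀, ht₁⟩, rfl⟩ := hab
  exact ⟨Real.rpow_nonneg (sub_nonneg.2 ht₁) _, Real.rpow_nonneg ht₀ _⟩

theorem exists_one_mem_Mp : ∃ b, ((1 : ℝ), b) ∈ Mp p :=
  ⟨_, 0, ⟨le_rfl, zero_le_one⟩, by rw [sub_zero, Real.one_rpow]⟩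

theorem isCompact_Mp (hp : 1 ≤ p) : IsCompact (Mp p) := by
  have he : 0 ≤ 1 - p⁻¹ := sub_nonneg.2 (inv_le_one_of_one_le₀ hp)
  have hcont : Continuous fun t : ℝ => ((1 - t) ^ (1 - p⁻¹), t ^ (1 - p⁻¹)) :=
    ((Real.continuous_rpow_const he).comp (continuous_const.sub continuous_id)).prodMk
      (Real.continuous_rpow_const he)
  convert isCompact_Icc.image hcont using 1
  ext ab
  exact exists_congr fun t => and_congr_right fun _ => eq_comm

theorem segment_subset_lowerClosure_Mp (hp : 1 ≤ p) :
    ∀ m₁ ∈ Mp p, ∀ m₂ ∈ Mp p, segment ℝ m₁ m₂ ⊆ lowerClosure (Mp p) := by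
  rintro _ ⟨t₁, ⟨ht₁₀, ht₁₁⟩, rfl⟩ _ ⟨t₂, ⟨ht₂₀, ht₂₁⟩, rfl⟩ _ ⟨a, b, ha, hb, hab, rfl⟩
  have hconc := Real.concaveOn_rpow (sub_nonneg.2 (inv_le_one_of_one_le₀ hp))
    (sub_le_self 1 (inv_nonneg.2 (zero_le_one.trans hp)))
  refine ⟨_, ⟨a * t₁ + b * t₂, ⟨by positivity, ?_⟩, rfl⟩, ?_, ?_⟩
  · nlinarith
  · have h1t : 1 - (a * t₁ + b * t₂) = a * (1 - t₁) + b * (1 - t₂) := by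
      linear_combination -hab
    simpa [h1t] using hconc.2 (mem_Ici.2 (sub_nonneg.2 ht₁₁)) (mem_Ici.2 (sub_nonneg.2 ht₂₁))
      ha hb hab
  · simpa using hconc.2 (mem_Ici.2 ht₁₀) (mem_Ici.2 ht₂₀) ha hb hab

end Mp

/-- If `f, g` are `s`-concave with supports containing the origin, then `f ⊕_{p,s} g`
is `s`-concave and its support contains the origin. -/
theorem oplusP_isSConcave {n : ℕ} (p s : ℝ) (hp : 1 ≤ p) (hs : 0 < s)
    (f g : En n → ℝ) (hf0 : ∀ x, 0 ≤ f x) (hg0 : ∀ x, 0 ≤ g x)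
    (hf : IsSConcave s f) (hg : IsSConcave s g)
    (hfo : (0 : En n) ∈ fsupp f) (hgo : (0 : En n) ∈ fsupp g) :
    IsSConcave s (oplusP p s f g) ∧ (0 : En n) ∈ fsupp (oplusP p s f g) :=
  oplusM_isSConcave (isCompact_Mp hp) (fun _ => nonneg_of_mem_Mp)
    (segment_subset_lowerClosure_Mp hp) exists_one_mem_Mp hs hf0 hg0 hf hg hfo hgo
end
end

section
/- Let 0 < λ < 1 and let t be a positive integer. Suppose h, f, g : ℝⁿ → [0,∞) satisfy h((1-λ)^{1/q} μ^{1/p} x + λ^{1/q} ω^{1/p} y)^{1/s} ≥ (1-λ)^{1/q} μ^{1/p} f(x)^{1/s} + λ^{1/q} ω^{1/p} g(y)^{1/s} for all x ∈ supp f, y ∈ supp g, λ ∈ [0,1], where p ≥ 1 with conjugate q, and μ, ω, s > 0. Define f̃, g̃, h̃ : ℝ^{nt} → [0,∞) by f̃(x₁,…,x_t) = ∏ᵢ f(xᵢ), etc. Then for all x, y ∈ ℝ^{nt} and λ ∈ [0,1]: h̃((1-λ)^{1/q} μ^{1/p} x + λ^{1/q} ω^{1/p} y)^{1/(ts)} ≥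 (1-λ)^{1/q} μ^{1/p} f̃(x)^{1/(ts)} + λ^{1/q} ω^{1/p} g̃(y)^{1/(ts)}. -/
open MeasureTheory Set Function

noncomputable section

open Finset

/-! Applying the hypothesis coordinatewise gives `aᵢ + bᵢ ≤ h(zᵢ)^{1/s}` with
`aᵢ = c f(xᵢ)^{1/s}`, `bᵢ = d g(yᵢ)^{1/s}`, `zᵢ = c xᵢ + d yᵢ`. Taking geometric means (weights `1/t`) of both
sides proves the claim, because the constants `c, d` factor out of a geometric mean and the
geometric mean is superadditive: `∏ aᵢ^{wᵢ} + ∏ bᵢ^{wᵢ} ≤ ∏ (aᵢ + bᵢ)^{wᵢ}`, which is AM–GM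
applied to the ratios `aᵢ / (aᵢ + bᵢ)` and `bᵢ / (aᵢ + bᵢ)`, whose weighted means add up to
at most `1`. -/

theorem geom_mean_weighted_add_le {ι : Type*} (s : Finset ι) (w a b : ι → ℝ)
    (hw : ∀ i ∈ s, 0 ≤ w i) (hw' : ∑ i ∈ s, w i = 1)
    (ha : ∀ i ∈ s, 0 ≤ a i) (hb : ∀ i ∈ s, 0 ≤ b i) :
    ∏ i ∈ s, a i ^ w i + ∏ i ∈ s, b i ^ w i ≤ ∏ i ∈ s, (a i + b i) ^ w i := by
  set G := ∏ i ∈ s, (a i + b i) ^ w i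
  have hab : ∀ i ∈ s, 0 ≤ a i + b i := fun i hi => add_nonneg (ha i hi) (hb i hi)
  have le_G : ∀ c : ι → ℝ, (∀ i ∈ s, 0 ≤ c i) → (∀ i ∈ s, c i ≤ a i + b i) →
      ∏ i ∈ s, c i ^ w i ≤ G := fun c hc hca =>
    prod_le_prod (fun i hi => Real.rpow_nonneg (hc i hi) _)
      fun i hi => Real.rpow_le_rpow (hc i hi) (hca i hi) (hw i hi)
  have amgm : ∀ c : ι → ℝ, (∀ i ∈ s, 0 ≤ c i) →
      (∏ i ∈ s, c i ^ w i) / G ≤ ∑ i ∈ s, w i * (c i / (a i + b i)) := fun c hc => by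
    rw [← prod_div_distrib, ← prod_congr rfl fun i hi => Real.div_rpow (hc i hi) (hab i hi) _]
    exact Real.geom_mean_le_arith_mean_weighted s w _ hw hw'
      fun i hi => div_nonneg (hc i hi) (hab i hi)
  rcases (prod_nonneg fun i hi => Real.rpow_nonneg (hab i hi) (w i) : 0 ≤ G).eq_or_lt with hG | hG
  · linarith [le_G a ha fun i hi => le_add_of_nonneg_right (hb i hi),
      le_G b hb fun i hi => le_add_of_nonneg_left (ha i hi)]
  rw [← div_le_one hG, add_div]
  calc _ ≤ ∑ i ∈ s, w i * (a i / (a i + b i)) + ∑ i ∈ s, w i * (b i / (a i + b i)) :=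
        add_le_add (amgm a ha) (amgm b hb)
    _ = ∑ i ∈ s, w i * ((a i + b i) / (a i + b i)) := by
        rw [← sum_add_distrib]; simp only [← mul_add, add_div]
    _ ≤ ∑ i ∈ s, w i :=
        sum_le_sum fun i hi => mul_le_of_le_one_right (hw i hi) (div_self_le_one _)
    _ = 1 := hw'

theorem prod_rpow_mul_inv {ι : Type*} (s : Finset ι) (v : ι → ℝ) (hv : ∀ i ∈ s, 0 ≤ v i)
    (r q : ℝ) : (∏ i ∈ s, v i) ^ (r * q)⁻¹ = ∏ i ∈ s, (v i ^ q⁻¹) ^ r⁻¹ := by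
  rw [Real.finsetProd_rpow _ _ fun i hi => Real.rpow_nonneg (hv i hi) _,
    Real.finsetProd_rpow _ _ hv, ← Real.rpow_mul (prod_nonneg hv), mul_inv, mul_comm]

theorem mul_prod_rpow_inv_card {ι : Type*} (s : Finset ι) (hs : s.Nonempty) {c : ℝ} (hc : 0 ≤ c)
    (z : ι → ℝ) (hz : ∀ i ∈ s, 0 ≤ z i) :
    c * ∏ i ∈ s, z i ^ (#s : ℝ)⁻¹ = ∏ i ∈ s, (c * z i) ^ (#s : ℝ)⁻¹ := by
  rw [prod_congr rfl fun i hi => Real.mul_rpow hc (hz i hi), prod_mul_distrib, prod_const,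
    ← Real.rpow_natCast, ← Real.rpow_mul hc, inv_mul_cancel₀ (by simpa using hs.ne_empty),
    Real.rpow_one]

theorem tensorization_general {n : ℕ} (t : ℕ) (ht : 0 < t) (p s μ ω : ℝ)
    (hμ : 0 < μ) (hω : 0 < ω)
    (f g h : En n → ℝ)
    (hf0 : ∀ x, 0 ≤ f x) (hg0 : ∀ x, 0 ≤ g x) (hh0 : ∀ x, 0 ≤ h x)
    (hcond : ∀ x ∈ fsupp f, ∀ y ∈ fsupp g, ∀ l ∈ Icc (0:ℝ) 1,
      ((1 - l) ^ (1 - p⁻¹) * μ ^ p⁻¹) * f x ^ s⁻¹ + (l ^ (1 - p⁻¹) * ω ^ p⁻¹) * g y ^ s⁻¹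
        ≤ h (((1 - l) ^ (1 - p⁻¹) * μ ^ p⁻¹) • x + (l ^ (1 - p⁻¹) * ω ^ p⁻¹) • y) ^ s⁻¹) :
    ∀ x y : Fin t → En n, (∀ i, x i ∈ fsupp f) → (∀ i, y i ∈ fsupp g) →
      ∀ l ∈ Icc (0:ℝ) 1,
      ((1 - l) ^ (1 - p⁻¹) * μ ^ p⁻¹) * (∏ i, f (x i)) ^ ((t : ℝ) * s)⁻¹
          + (l ^ (1 - p⁻¹) * ω ^ p⁻¹) * (∏ i, g (y i)) ^ ((t : ℝ) * s)⁻¹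
        ≤ (∏ i, h ((((1 - l) ^ (1 - p⁻¹) * μ ^ p⁻¹) • x
              + (l ^ (1 - p⁻¹) * ω ^ p⁻¹) • y) i)) ^ ((t : ℝ) * s)⁻¹ := by
  intro x y hx hy l hl
  set c := (1 - l) ^ (1 - p⁻¹) * μ ^ p⁻¹
  set d := l ^ (1 - p⁻¹) * ω ^ p⁻¹
  have hc : 0 ≤ c := mul_nonneg (Real.rpow_nonneg (sub_nonneg.2 hl.2) _) (Real.rpow_nonneg hμ.le _)
  have hd : 0 ≤ d := mul_nonneg (Real.rpow_nonneg hl.1 _) (Real.rpow_nonneg hω.le _)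
  have hcard : ((#(univ : Finset (Fin t)) : ℕ) : ℝ) = t := by simp
  have huniv : (univ : Finset (Fin t)).Nonempty := univ_nonempty_iff.2 (Fin.pos_iff_nonempty.1 ht)
  simp only [prod_rpow_mul_inv _ _ (fun i _ => hf0 _), prod_rpow_mul_inv _ _ (fun i _ => hg0 _),
    prod_rpow_mul_inv _ _ (fun i _ => hh0 _), ← hcard,
    mul_prod_rpow_inv_card _ huniv hc _ (fun i _ => Real.rpow_nonneg (hf0 _) _),
    mul_prod_rpow_inv_card _ huniv hd _ (fun i _ => Real.rpow_nonneg (hg0 _) _)]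
  have hfx : ∀ i, 0 ≤ c * f (x i) ^ s⁻¹ := fun i => mul_nonneg hc (Real.rpow_nonneg (hf0 _) _)
  have hgy : ∀ i, 0 ≤ d * g (y i) ^ s⁻¹ := fun i => mul_nonneg hd (Real.rpow_nonneg (hg0 _) _)
  have hw : ∑ _i : Fin t, ((#(univ : Finset (Fin t)) : ℝ))⁻¹ = 1 := by
    rw [sum_const, nsmul_eq_mul, mul_inv_cancel₀ (by simpa using ht.ne')]
  calc _ ≤ ∏ i, (c * f (x i) ^ s⁻¹ + d * g (y i) ^ s⁻¹) ^ (#(univ : Finset (Fin t)) : ℝ)⁻¹ :=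
        geom_mean_weighted_add_le _ _ _ _ (fun _ _ => by positivity) hw
          (fun i _ => hfx i) (fun i _ => hgy i)
    _ ≤ _ := prod_le_prod (fun i _ => Real.rpow_nonneg (add_nonneg (hfx i) (hgy i)) _) fun i _ =>
        Real.rpow_le_rpow (add_nonneg (hfx i) (hgy i)) (hcond _ (hx i) _ (hy i) l hl) (by positivity)

/-- Tensorization step (inequality (4.2)): the hypothesis of the `L_p`
Prékopa–Leindler inequality passes from `(f, g, h)` on `ℝⁿ` with exponent `1/s`
to `(f̃, g̃, h̃)` on `ℝ^{nt}` with exponent `1/(ts)`, where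
`f̃(x₁,…,x_t) = ∏ᵢ f(xᵢ)` and `1/q = 1 - 1/p`. -/
theorem tensorization {n : ℕ} (t : ℕ) (ht : 0 < t) (p s μ ω : ℝ)
    (hp : 1 ≤ p) (hs : 0 < s) (hμ : 0 < μ) (hω : 0 < ω)
    (f g h : En n → ℝ)
    (hf0 : ∀ x, 0 ≤ f x) (hg0 : ∀ x, 0 ≤ g x) (hh0 : ∀ x, 0 ≤ h x)
    (hcond : ∀ x ∈ fsupp f, ∀ y ∈ fsupp g, ∀ l ∈ Icc (0:ℝ) 1,
      ((1 - l) ^ (1 - p⁻¹) * μ ^ p⁻¹) * f x ^ s⁻¹ + (l ^ (1 - p⁻¹) * ω ^ p⁻¹) * g y ^ s⁻¹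
        ≤ h (((1 - l) ^ (1 - p⁻¹) * μ ^ p⁻¹) • x + (l ^ (1 - p⁻¹) * ω ^ p⁻¹) • y) ^ s⁻¹) :
    ∀ x y : Fin t → En n, (∀ i, x i ∈ fsupp f) → (∀ i, y i ∈ fsupp g) →
      ∀ l ∈ Icc (0:ℝ) 1,
      ((1 - l) ^ (1 - p⁻¹) * μ ^ p⁻¹) * (∏ i, f (x i)) ^ ((t : ℝ) * s)⁻¹
          + (l ^ (1 - p⁻¹) * ω ^ p⁻¹) * (∏ i, g (y i)) ^ ((t : ℝ) * s)⁻¹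
        ≤ (∏ i, h ((((1 - l) ^ (1 - p⁻¹) * μ ^ p⁻¹) • x
              + (l ^ (1 - p⁻¹) * ω ^ p⁻¹) • y) i)) ^ ((t : ℝ) * s)⁻¹ :=
  tensorization_general t ht p s μ ω hμ hω f g h hf0 hg0 hh0 hcond
end
end

section
/- Let p ≥ 1 with Hölder conjugate q, and let K, L be nonempty compact sets in ℝⁿ. Then χ_{K+ₚL}((1-λ)^{1/q}x + λ^{1/q}y) = 1 for all x ∈ K, y ∈ L, λ ∈ [0,1], and consequently V*ₙ(K +ₚ L)^{p/n} ≥ Vₙ(K)^{p/n} + Vₙ(L)^{p/n}. -/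
open MeasureTheory Set Function
open scoped ENNReal NNReal Pointwise

noncomputable section

/-- the pointwise `L_p` sum of sets, with `1/q = 1 - 1/p`. -/
def lpSum {n : ℕ} (p : ℝ) (K L : Set (En n)) : Set (En n) :=
  {z | ∃ x ∈ K, ∃ y ∈ L, ∃ t ∈ Icc (0:ℝ) 1,
    z = ((1 - t) ^ (1 - p⁻¹)) • x + (t ^ (1 - p⁻¹)) • y}

lemma ennreal_amgm {t : ℝ} (ht0 : 0 < t) (ht1 : t < 1) (u v : ℝ≥0∞) :
    u ^ (1 - t) * v ^ t ≤ ENNReal.ofReal (1 - t) * u + ENNReal.ofReal t * v := by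
  have h1t : (0:ℝ) < 1 - t := by linarith
  rcases eq_or_ne u ⊤ with rfl | hu
  · rcases eq_or_ne v 0 with rfl | hv
    · simp [ENNReal.zero_rpow_of_pos ht0]
    · have : ENNReal.ofReal (1 - t) * ⊤ = ⊤ := by
        rw [ENNReal.mul_top]
        simp [ENNReal.ofReal_eq_zero, not_le.2 h1t]
      calc (⊤:ℝ≥0∞) ^ (1-t) * v ^ t ≤ ⊤ := le_top
        _ ≤ _ := by rw [this]; exact le_add_right le_rfl
  rcases eq_or_ne v ⊤ with rfl | hv
  · rcases eq_or_ne u 0 with rfl | hu0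
    · simp [ENNReal.zero_rpow_of_pos h1t]
    · have : ENNReal.ofReal t * ⊤ = ⊤ := by
        rw [ENNReal.mul_top]
        simp [ENNReal.ofReal_eq_zero, not_le.2 ht0]
      calc u ^ (1-t) * (⊤:ℝ≥0∞) ^ t ≤ ⊤ := le_top
        _ ≤ _ := by rw [this]; exact le_add_left le_rfl
  · lift u to NNReal using hu
    lift v to NNReal using hv
    have hw : Real.toNNReal (1 - t) + Real.toNNReal t = 1 := by
      ext
      simp [Real.toNNReal_of_nonneg h1t.le, Real.toNNReal_of_nonneg ht0.le]
    have key := NNReal.geom_mean_le_arith_mean2_weighted (Real.toNNReal (1-t))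
      (Real.toNNReal t) u v hw
    have e1 : ((Real.toNNReal (1-t) : ℝ)) = 1 - t := Real.coe_toNNReal _ h1t.le
    have e2 : ((Real.toNNReal t : ℝ)) = t := Real.coe_toNNReal _ ht0.le
    rw [e1, e2] at key
    calc (u:ℝ≥0∞) ^ (1-t) * (v:ℝ≥0∞) ^ t
        = ((u ^ (1-t) * v ^ t : NNReal) : ℝ≥0∞) := by
          rw [ENNReal.coe_mul, ← ENNReal.coe_rpow_of_nonneg _ h1t.le,
            ← ENNReal.coe_rpow_of_nonneg _ ht0.le]
      _ ≤ ((Real.toNNReal (1-t) * u + Real.toNNReal t * v : NNReal) : ℝ≥0∞) :=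
          ENNReal.coe_le_coe.2 key
      _ = _ := by
          rw [ENNReal.coe_add, ENNReal.coe_mul, ENNReal.coe_mul,
            ENNReal.ofReal, ENNReal.ofReal]

/-- 1-D superadditivity for compact sets. -/
lemma vol_add_compact {A B : Set ℝ} (hA : IsCompact A) (hB : IsCompact B)
    (hA0 : A.Nonempty) (hB0 : B.Nonempty) :
    volume A + volume B ≤ volume (A + B) := by
  set M := sSup A with hM
  set m := sInf B with hm
  have hMA : M ∈ A := hA.sSup_mem hA0
  have hmB : m ∈ B := hB.sInf_mem hB0
  set S : Set ℝ := m +ᵥ A with hS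
  set T : Set ℝ := M +ᵥ B with hT
  have hSsub : S ⊆ A + B := by
    rintro s ⟨a, ha, rfl⟩
    exact ⟨a, ha, m, hmB, add_comm a m⟩
  have hTsub : T ⊆ A + B := by
    rintro s ⟨b, hb, rfl⟩
    exact ⟨M, hMA, b, hb, rfl⟩
  have hST : S ∩ T ⊆ {M + m} := by
    rintro s ⟨⟨a, ha, rfl⟩, ⟨b, hb, hba⟩⟩
    simp only [vadd_eq_add] at hba ⊢
    have ha' := le_csSup hA.bddAbove ha
    have hb' := csInf_le hB.bddBelow hb
    simp only [mem_singleton_iff]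
    linarith
  have hTm : MeasurableSet T := (hB.vadd M).measurableSet
  have := measure_union_add_inter (μ := volume) S hTm
  have hIzero : volume (S ∩ T) = 0 :=
    measure_mono_null hST (measure_singleton _)
  calc volume A + volume B = volume S + volume T := by
        rw [hS, hT, measure_vadd, measure_vadd]
    _ = volume (S ∪ T) + volume (S ∩ T) := this.symm
    _ = volume (S ∪ T) := by rw [hIzero, add_zero]
    _ ≤ volume (A + B) := measure_mono (union_subset hSsub hTsub)

/-- 1-D superadditivity for measurable sets of finite measure. -/
lemma vol_add_meas {A B : Set ℝ} (hA : MeasurableSet A) (hB : MeasurableSet B)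
    (hAf : volume A ≠ ⊤) (hBf : volume B ≠ ⊤)
    (hA0 : A.Nonempty) (hB0 : B.Nonempty) :
    volume A + volume B ≤ volume (A + B) := by
  apply ENNReal.le_of_forall_pos_le_add
  intro ε hε _
  have hε2 : ((ε:ℝ≥0∞)/2) ≠ 0 := by
    simp [ENNReal.div_eq_zero_iff, (ENNReal.coe_ne_zero).2 hε.ne']
  obtain ⟨KA, hKAsub, hKAc, hKA⟩ := hA.exists_isCompact_lt_add hAf hε2
  obtain ⟨KB, hKBsub, hKBc, hKB⟩ := hB.exists_isCompact_lt_add hBf hε2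
  obtain ⟨a₀, ha₀⟩ := hA0
  obtain ⟨b₀, hb₀⟩ := hB0
  set KA' : Set ℝ := KA ∪ {a₀} with hKA'
  set KB' : Set ℝ := KB ∪ {b₀} with hKB'
  have hKA'c : IsCompact KA' := hKAc.union isCompact_singleton
  have hKB'c : IsCompact KB' := hKBc.union isCompact_singleton
  have hKA'sub : KA' ⊆ A := union_subset hKAsub (by simpa using ha₀)
  have hKB'sub : KB' ⊆ B := union_subset hKBsub (by simpa using hb₀)
  have key : volume KA' + volume KB' ≤ volume (A + B) :=
    le_trans (vol_add_compact hKA'c hKB'c ⟨a₀, subset_union_right rfl⟩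
      ⟨b₀, subset_union_right rfl⟩)
      (measure_mono (add_subset_add hKA'sub hKB'sub))
  have h1 : volume A ≤ volume KA' + ε/2 :=
    le_trans hKA.le (add_le_add_left (measure_mono subset_union_left) _)
  have h2 : volume B ≤ volume KB' + ε/2 :=
    le_trans hKB.le (add_le_add_left (measure_mono subset_union_left) _)
  calc volume A + volume B ≤ (volume KA' + ε/2) + (volume KB' + ε/2) :=
        add_le_add h1 h2
    _ = volume KA' + volume KB' + (ε/2 + ε/2) := by ring
    _ ≤ volume (A + B) + ε := by
        rw [ENNReal.add_halves]
        exact add_le_add_left key _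

/-- 1-D superadditivity for scaled measurable sets. -/
lemma vol_smul_add_meas {A B : Set ℝ} (hA : MeasurableSet A) (hB : MeasurableSet B)
    (hAf : volume A ≠ ⊤) (hBf : volume B ≠ ⊤)
    (hA0 : A.Nonempty) (hB0 : B.Nonempty) {c d : ℝ} (hc : 0 < c) (hd : 0 < d) :
    ENNReal.ofReal c * volume A + ENNReal.ofReal d * volume B ≤ volume (c • A + d • B) := by
  have hvc : volume (c • A) = ENNReal.ofReal c * volume A := by
    rw [Measure.addHaar_smul]
    congr 1
    simp [abs_of_pos hc]
  have hvd : volume (d • B) = ENNReal.ofReal d * volume B := by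
    rw [Measure.addHaar_smul]
    congr 1
    simp [abs_of_pos hd]
  rw [← hvc, ← hvd]
  exact vol_add_meas (hA.const_smul₀ c) (hB.const_smul₀ d)
    (by rw [hvc]; exact ENNReal.mul_ne_top ENNReal.ofReal_ne_top hAf)
    (by rw [hvd]; exact ENNReal.mul_ne_top ENNReal.ofReal_ne_top hBf)
    (hA0.smul_set) (hB0.smul_set)

/-- Layer-cake for functions bounded by 1. -/
lemma layercake_le_one (F : ℝ → ℝ≥0∞) (hF : Measurable F) (hF1 : ∀ x, F x ≤ 1) :
    ∫⁻ x, F x = ∫⁻ l in Ioo (0:ℝ) 1, volume {x | ENNReal.ofReal l < F x} := by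
  have hFne : ∀ x, F x ≠ ⊤ := fun x => (lt_of_le_of_lt (hF1 x) ENNReal.one_lt_top).ne
  have h1 : ∫⁻ x, F x = ∫⁻ x, ENNReal.ofReal ((F x).toReal) := by
    apply lintegral_congr
    intro x
    rw [ENNReal.ofReal_toReal (hFne x)]
  rw [h1, lintegral_eq_lintegral_meas_lt volume
    (ae_of_all _ fun x => ENNReal.toReal_nonneg)
    (hF.ennreal_toReal.aemeasurable)]
  have h2 : ∫⁻ l in Ioi (0:ℝ), volume {a | l < (F a).toReal}
      = ∫⁻ l in Ioi (0:ℝ), volume {a | ENNReal.ofReal l < F a} := by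
    apply setLIntegral_congr_fun measurableSet_Ioi
    intro l hl
    beta_reduce
    congr 1
    ext a
    simp only [mem_setOf_eq]
    rw [ENNReal.ofReal_lt_iff_lt_toReal (le_of_lt hl) (hFne a)]
  rw [h2]
  have hsplit : Ioi (0:ℝ) = Ioo (0:ℝ) 1 ∪ Ici (1:ℝ) := (Ioo_union_Ici_eq_Ioi one_pos).symm
  rw [hsplit, lintegral_union measurableSet_Ici ((Iio_disjoint_Ici le_rfl).mono_left Ioo_subset_Iio_self)]
  have h3 : ∫⁻ l in Ici (1:ℝ), volume {a | ENNReal.ofReal l < F a} = 0 := by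
    have : ∫⁻ l in Ici (1:ℝ), volume {a | ENNReal.ofReal l < F a}
        = ∫⁻ _ in Ici (1:ℝ), (0:ℝ≥0∞) := by
      apply setLIntegral_congr_fun measurableSet_Ici
      intro l hl
      beta_reduce
      have : {a | ENNReal.ofReal l < F a} = ∅ := by
        ext a
        simp only [mem_setOf_eq, mem_empty_iff_false, iff_false, not_lt]
        exact le_trans (hF1 a) (ENNReal.one_le_ofReal.2 hl)
      rw [this, measure_empty]
    rw [this, lintegral_zero]
  rw [h3, add_zero]

/-- Core 1-D Prékopa–Leindler, finite nonzero integrals and finite essSup. -/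
lemma pl_dim1_core {t : ℝ} (ht0 : 0 < t) (ht1 : t < 1) (f g h : ℝ → ℝ≥0∞)
    (hf : Measurable f) (hg : Measurable g) (hh : Measurable h)
    (hyp : ∀ x y : ℝ, f x ^ (1 - t) * g y ^ t ≤ h ((1 - t) * x + t * y))
    (hf0 : ∫⁻ x, f x ≠ 0) (hfT : ∫⁻ x, f x ≠ ⊤)
    (hg0 : ∫⁻ x, g x ≠ 0) (hgT : ∫⁻ x, g x ≠ ⊤)
    (hMfT : essSup f volume ≠ ⊤) (hMgT : essSup g volume ≠ ⊤) :
    (∫⁻ x, f x) ^ (1 - t) * (∫⁻ y, g y) ^ t ≤ ∫⁻ z, h z := by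
  have h1t : (0:ℝ) < 1 - t := by linarith
  set Mf := essSup f volume with hMf
  set Mg := essSup g volume with hMg
  have hMf0 : Mf ≠ 0 := by
    intro h0
    apply hf0
    have hz : f =ᵐ[volume] 0 := by
      filter_upwards [ae_le_essSup (f := f) (μ := volume)] with x hx
      rw [← hMf, h0] at hx
      simpa using hx
    rw [lintegral_congr_ae hz]
    simp
  have hMg0 : Mg ≠ 0 := by
    intro h0
    apply hg0
    have hz : g =ᵐ[volume] 0 := by
      filter_upwards [ae_le_essSup (f := g) (μ := volume)] with x hx
      rw [← hMg, h0] at hx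
      simpa using hx
    rw [lintegral_congr_ae hz]
    simp
  have hMf1t0 : Mf ^ (1 - t) ≠ 0 := (ENNReal.rpow_pos (pos_iff_ne_zero.2 hMf0) hMfT).ne'
  have hMf1tT : Mf ^ (1 - t) ≠ ⊤ := ENNReal.rpow_ne_top_of_nonneg h1t.le hMfT
  have hMgt0 : Mg ^ t ≠ 0 := (ENNReal.rpow_pos (pos_iff_ne_zero.2 hMg0) hMgT).ne'
  have hMgtT : Mg ^ t ≠ ⊤ := ENNReal.rpow_ne_top_of_nonneg ht0.le hMgT
  set c := Mf ^ (1 - t) * Mg ^ t with hc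
  have hc0 : c ≠ 0 := mul_ne_zero hMf1t0 hMgt0
  have hcT : c ≠ ⊤ := ENNReal.mul_ne_top hMf1tT hMgtT
  set F := fun x => min (f x / Mf) 1 with hF
  set G := fun y => min (g y / Mg) 1 with hG
  set H := fun z => min (h z / c) 1 with hH
  have hFm : Measurable F := (hf.div_const _).min measurable_const
  have hGm : Measurable G := (hg.div_const _).min measurable_const
  have hHm : Measurable H := (hh.div_const _).min measurable_const
  have hF1 : ∀ x, F x ≤ 1 := fun x => min_le_right _ _
  have hG1 : ∀ x, G x ≤ 1 := fun x => min_le_right _ _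
  have hH1 : ∀ x, H x ≤ 1 := fun x => min_le_right _ _
  -- hypothesis for F G H
  have hypFGH : ∀ x y : ℝ, F x ^ (1 - t) * G y ^ t ≤ H ((1 - t) * x + t * y) := by
    intro x y
    apply le_min
    · calc F x ^ (1 - t) * G y ^ t ≤ (f x / Mf) ^ (1 - t) * (g y / Mg) ^ t :=
            mul_le_mul' (ENNReal.rpow_le_rpow (min_le_left _ _) h1t.le)
              (ENNReal.rpow_le_rpow (min_le_left _ _) ht0.le)
        _ = (f x ^ (1 - t) * g y ^ t) / c := by
            rw [ENNReal.div_rpow_of_nonneg _ _ h1t.le, ENNReal.div_rpow_of_nonneg _ _ ht0.le,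
              hc, div_eq_mul_inv, div_eq_mul_inv, div_eq_mul_inv,
              ENNReal.mul_inv (Or.inl hMf1t0) (Or.inl hMf1tT)]
            ring
        _ ≤ h ((1 - t) * x + t * y) / c := by
            gcongr
            exact hyp x y
    · calc F x ^ (1 - t) * G y ^ t ≤ 1 ^ (1 - t) * 1 ^ t :=
            mul_le_mul' (ENNReal.rpow_le_rpow (hF1 x) h1t.le)
              (ENNReal.rpow_le_rpow (hG1 y) ht0.le)
        _ = 1 := by rw [ENNReal.one_rpow, ENNReal.one_rpow, one_mul]
  -- level sets
  have hlevelF : ∀ l : ℝ, l ∈ Ioo (0:ℝ) 1 → volume {x | ENNReal.ofReal l < F x} ≠ 0 ∧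
      volume {x | ENNReal.ofReal l < F x} ≠ ⊤ := by
    intro l hl
    have hlE0 : ENNReal.ofReal l ≠ 0 := by simpa [ENNReal.ofReal_eq_zero] using not_le.2 hl.1
    have hlE1 : ENNReal.ofReal l < 1 := by
      rw [← ENNReal.ofReal_one]
      exact ENNReal.ofReal_lt_ofReal_iff_of_nonneg hl.1.le |>.2 hl.2
    constructor
    · intro h0
      have hae : ∀ᵐ x ∂(volume : Measure ℝ), F x ≤ ENNReal.ofReal l := by
        rw [ae_iff]
        push_neg
        simpa [not_le] using h0
      have hfae : f ≤ᵐ[volume] fun _ => ENNReal.ofReal l * Mf := by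
        filter_upwards [hae] with x hx
        have hdiv : f x / Mf ≤ ENNReal.ofReal l := by
          by_contra hcon
          push_neg at hcon
          have : F x = 1 ⊓ (f x / Mf) := by rw [hF]; simp [min_comm]
          have hFx : ENNReal.ofReal l < F x := by
            rw [hF]
            exact lt_min hcon hlE1
          exact absurd hFx (not_lt.2 hx)
        calc f x = f x / Mf * Mf := by
              rw [ENNReal.div_mul_cancel hMf0 hMfT]
          _ ≤ ENNReal.ofReal l * Mf := by gcongr
      have : Mf ≤ ENNReal.ofReal l * Mf := essSup_le_of_ae_le _ hfae
      have hlt : ENNReal.ofReal l * Mf < 1 * Mf := by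
        apply ENNReal.mul_lt_mul_left hMf0 hMfT
        exact hlE1
      rw [one_mul] at hlt
      exact absurd this (not_le.2 hlt)
    · -- finite measure via Markov
      have hsub : {x | ENNReal.ofReal l < F x} ⊆ {x | ENNReal.ofReal l * Mf ≤ f x} := by
        intro x hx
        simp only [mem_setOf_eq] at hx ⊢
        have : ENNReal.ofReal l < f x / Mf := lt_of_lt_of_le hx (min_le_left _ _)
        rw [ENNReal.lt_div_iff_mul_lt (Or.inl hMf0) (Or.inl hMfT)] at this
        exact this.le
      have := measure_mono (μ := (volume : Measure ℝ)) hsub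
      intro hT
      rw [hT] at this
      have hMark := meas_ge_le_lintegral_div (μ := volume) hf.aemeasurable
        (ε := ENNReal.ofReal l * Mf) (by simp [hlE0, hMf0]) (ENNReal.mul_ne_top ENNReal.ofReal_ne_top hMfT)
      have : (⊤:ℝ≥0∞) ≤ (∫⁻ x, f x) / (ENNReal.ofReal l * Mf) := le_trans this hMark
      have hfin : (∫⁻ x, f x) / (ENNReal.ofReal l * Mf) < ⊤ :=
        ENNReal.div_lt_top hfT (by simp [hlE0, hMf0])
      exact absurd this (not_le.2 hfin)
  -- level sets for G
  have hlevelG : ∀ l : ℝ, l ∈ Ioo (0:ℝ) 1 → volume {y | ENNReal.ofReal l < G y} ≠ 0 ∧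
      volume {y | ENNReal.ofReal l < G y} ≠ ⊤ := by
    intro l hl
    have hlE0 : ENNReal.ofReal l ≠ 0 := by simpa [ENNReal.ofReal_eq_zero] using not_le.2 hl.1
    have hlE1 : ENNReal.ofReal l < 1 := by
      rw [← ENNReal.ofReal_one]
      exact ENNReal.ofReal_lt_ofReal_iff_of_nonneg hl.1.le |>.2 hl.2
    constructor
    · intro h0
      have hae : ∀ᵐ y ∂(volume : Measure ℝ), G y ≤ ENNReal.ofReal l := by
        rw [ae_iff]
        push_neg
        simpa [not_le] using h0
      have hgae : g ≤ᵐ[volume] fun _ => ENNReal.ofReal l * Mg := by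
        filter_upwards [hae] with y hy
        have hdiv : g y / Mg ≤ ENNReal.ofReal l := by
          by_contra hcon
          push_neg at hcon
          have hGy : ENNReal.ofReal l < G y := by
            rw [hG]
            exact lt_min hcon hlE1
          exact absurd hGy (not_lt.2 hy)
        calc g y = g y / Mg * Mg := by
              rw [ENNReal.div_mul_cancel hMg0 hMgT]
          _ ≤ ENNReal.ofReal l * Mg := by gcongr
      have : Mg ≤ ENNReal.ofReal l * Mg := essSup_le_of_ae_le _ hgae
      have hlt : ENNReal.ofReal l * Mg < 1 * Mg := by
        apply ENNReal.mul_lt_mul_left hMg0 hMgT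
        exact hlE1
      rw [one_mul] at hlt
      exact absurd this (not_le.2 hlt)
    · have hsub : {y | ENNReal.ofReal l < G y} ⊆ {y | ENNReal.ofReal l * Mg ≤ g y} := by
        intro y hy
        simp only [mem_setOf_eq] at hy ⊢
        have : ENNReal.ofReal l < g y / Mg := lt_of_lt_of_le hy (min_le_left _ _)
        rw [ENNReal.lt_div_iff_mul_lt (Or.inl hMg0) (Or.inl hMgT)] at this
        exact this.le
      have := measure_mono (μ := (volume : Measure ℝ)) hsub
      intro hT
      rw [hT] at this
      have hMark := meas_ge_le_lintegral_div (μ := volume) hg.aemeasurable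
        (ε := ENNReal.ofReal l * Mg) (by simp [hlE0, hMg0]) (ENNReal.mul_ne_top ENNReal.ofReal_ne_top hMgT)
      have : (⊤:ℝ≥0∞) ≤ (∫⁻ y, g y) / (ENNReal.ofReal l * Mg) := le_trans this hMark
      have hfin : (∫⁻ y, g y) / (ENNReal.ofReal l * Mg) < ⊤ :=
        ENNReal.div_lt_top hgT (by simp [hlE0, hMg0])
      exact absurd this (not_le.2 hfin)
  -- key level-set inequality
  have hkey : ∀ l ∈ Ioo (0:ℝ) 1,
      ENNReal.ofReal (1 - t) * volume {x | ENNReal.ofReal l < F x}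
        + ENNReal.ofReal t * volume {y | ENNReal.ofReal l < G y}
      ≤ volume {z | ENNReal.ofReal l < H z} := by
    intro l hl
    have hlE0 : ENNReal.ofReal l ≠ 0 := by simpa [ENNReal.ofReal_eq_zero] using not_le.2 hl.1
    set A := {x | ENNReal.ofReal l < F x} with hA
    set B := {y | ENNReal.ofReal l < G y} with hB
    have hAm : MeasurableSet A := measurableSet_lt measurable_const hFm
    have hBm : MeasurableSet B := measurableSet_lt measurable_const hGm
    have hincl : (1 - t) • A + t • B ⊆ {z | ENNReal.ofReal l < H z} := by
      rintro z ⟨x', ⟨x, hx, rfl⟩, y', ⟨y, hy, rfl⟩, rfl⟩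
      simp only [smul_eq_mul, mem_setOf_eq]
      have hxA : ENNReal.ofReal l < F x := hx
      have hyB : ENNReal.ofReal l < G y := hy
      have hrt0 : (ENNReal.ofReal l) ^ t ≠ 0 :=
        (ENNReal.rpow_pos (pos_iff_ne_zero.2 hlE0) ENNReal.ofReal_ne_top).ne'
      have hrtT : (ENNReal.ofReal l) ^ t ≠ ⊤ :=
        ENNReal.rpow_ne_top_of_nonneg ht0.le ENNReal.ofReal_ne_top
      calc ENNReal.ofReal l
          = ENNReal.ofReal l ^ (1 - t) * ENNReal.ofReal l ^ t := by
            rw [← ENNReal.rpow_add _ _ hlE0 ENNReal.ofReal_ne_top]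
            norm_num
        _ < F x ^ (1 - t) * ENNReal.ofReal l ^ t := by
            apply ENNReal.mul_lt_mul_left hrt0 hrtT
            exact ENNReal.rpow_lt_rpow hxA h1t
        _ ≤ F x ^ (1 - t) * G y ^ t :=
            mul_le_mul' le_rfl (ENNReal.rpow_le_rpow hyB.le ht0.le)
        _ ≤ H ((1 - t) * x + t * y) := hypFGH x y
    calc ENNReal.ofReal (1 - t) * volume A + ENNReal.ofReal t * volume B
        ≤ volume ((1 - t) • A + t • B) :=
          vol_smul_add_meas hAm hBm (hlevelF l hl).2 (hlevelG l hl).2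
            (nonempty_of_measure_ne_zero (hlevelF l hl).1)
            (nonempty_of_measure_ne_zero (hlevelG l hl).1) h1t ht0
      _ ≤ volume {z | ENNReal.ofReal l < H z} := measure_mono hincl
  -- layer cake for F, G, H
  have hmFl : Measurable fun l : ℝ => volume {x | ENNReal.ofReal l < F x} :=
    Antitone.measurable fun l l' hll' =>
      measure_mono fun x hx => lt_of_le_of_lt (ENNReal.ofReal_le_ofReal hll') hx
  have hmGl : Measurable fun l : ℝ => volume {y | ENNReal.ofReal l < G y} :=
    Antitone.measurable fun l l' hll' =>
      measure_mono fun y hy => lt_of_le_of_lt (ENNReal.ofReal_le_ofReal hll') hy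
  have main : ENNReal.ofReal (1 - t) * (∫⁻ x, F x) + ENNReal.ofReal t * (∫⁻ y, G y)
      ≤ ∫⁻ z, H z := by
    rw [layercake_le_one F hFm hF1, layercake_le_one G hGm hG1, layercake_le_one H hHm hH1]
    rw [← lintegral_const_mul' _ _ ENNReal.ofReal_ne_top,
      ← lintegral_const_mul' _ _ ENNReal.ofReal_ne_top,
      ← lintegral_add_left (hmFl.const_mul _)]
    exact lintegral_mono_ae ((ae_restrict_iff' measurableSet_Ioo).2 (ae_of_all _ hkey))
  -- identify ∫F and ∫G
  have hFf : (∫⁻ x, F x) = (∫⁻ x, f x) * Mf⁻¹ := by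
    have hFeq : F =ᵐ[volume] fun x => f x * Mf⁻¹ := by
      filter_upwards [ae_le_essSup (f := f) (μ := volume)] with x hx
      have hle : f x / Mf ≤ 1 := by
        rw [← ENNReal.div_self hMf0 hMfT]
        exact ENNReal.div_le_div_right hx _
      rw [hF]
      simp only [div_eq_mul_inv] at hle ⊢
      exact min_eq_left hle
    rw [lintegral_congr_ae hFeq, lintegral_mul_const' _ _ (ENNReal.inv_ne_top.2 hMf0)]
  have hGg : (∫⁻ y, G y) = (∫⁻ y, g y) * Mg⁻¹ := by
    have hGeq : G =ᵐ[volume] fun y => g y * Mg⁻¹ := by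
      filter_upwards [ae_le_essSup (f := g) (μ := volume)] with y hy
      have hle : g y / Mg ≤ 1 := by
        rw [← ENNReal.div_self hMg0 hMgT]
        exact ENNReal.div_le_div_right hy _
      rw [hG]
      simp only [div_eq_mul_inv] at hle ⊢
      exact min_eq_left hle
    rw [lintegral_congr_ae hGeq, lintegral_mul_const' _ _ (ENNReal.inv_ne_top.2 hMg0)]
  -- conclude
  have hch : ∀ z, c * H z ≤ h z := by
    intro z
    calc c * H z ≤ c * (h z / c) := mul_le_mul' le_rfl (min_le_left _ _)
      _ = h z := ENNReal.mul_div_cancel hc0 hcT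
  have hfinal : (∫⁻ x, f x) ^ (1 - t) * (∫⁻ y, g y) ^ t ≤ c * ∫⁻ z, H z := by
    have amgm := ennreal_amgm ht0 ht1 ((∫⁻ x, f x) * Mf⁻¹) ((∫⁻ y, g y) * Mg⁻¹)
    have halg : c * (((∫⁻ x, f x) * Mf⁻¹) ^ (1 - t) * (((∫⁻ y, g y) * Mg⁻¹) ^ t))
        = (Mf ^ (1 - t) * (Mf ^ (1 - t))⁻¹) * ((Mg ^ t * (Mg ^ t)⁻¹))
          * ((∫⁻ x, f x) ^ (1 - t) * (∫⁻ y, g y) ^ t) := by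
      rw [ENNReal.mul_rpow_of_nonneg _ _ h1t.le, ENNReal.mul_rpow_of_nonneg _ _ ht0.le,
        ENNReal.inv_rpow, ENNReal.inv_rpow, hc]
      ring
    calc (∫⁻ x, f x) ^ (1 - t) * (∫⁻ y, g y) ^ t
        = c * (((∫⁻ x, f x) * Mf⁻¹) ^ (1 - t) * (((∫⁻ y, g y) * Mg⁻¹) ^ t)) := by
          rw [halg, ENNReal.mul_inv_cancel hMf1t0 hMf1tT,
            ENNReal.mul_inv_cancel hMgt0 hMgtT, one_mul, one_mul]
      _ ≤ c * (ENNReal.ofReal (1 - t) * ((∫⁻ x, f x) * Mf⁻¹)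
            + ENNReal.ofReal t * ((∫⁻ y, g y) * Mg⁻¹)) := mul_le_mul' le_rfl amgm
      _ ≤ c * ∫⁻ z, H z := by
          apply mul_le_mul' le_rfl
          rw [← hFf, ← hGg]
          exact main
  calc (∫⁻ x, f x) ^ (1 - t) * (∫⁻ y, g y) ^ t ≤ c * ∫⁻ z, H z := hfinal
    _ = ∫⁻ z, c * H z := (lintegral_const_mul' _ _ hcT).symm
    _ ≤ ∫⁻ z, h z := lintegral_mono hch

/-- rpow of nonzero with positive exponent is nonzero. -/
lemma rpow_ne_zero' {x : ℝ≥0∞} {e : ℝ} (hx : x ≠ 0) (he : 0 < e) : x ^ e ≠ 0 := by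
  rcases eq_or_ne x ⊤ with rfl | hxT
  · rw [ENNReal.top_rpow_of_pos he]
    exact ENNReal.top_ne_zero
  · exact (ENNReal.rpow_pos (pos_iff_ne_zero.2 hx) hxT).ne'

/-- Truncation family for a measurable function. -/
lemma trunc_family (f : ℝ → ℝ≥0∞) (hf : Measurable f) :
    ∃ fk : ℕ → ℝ → ℝ≥0∞,
      (∀ k, Measurable (fk k)) ∧ (∀ k x, fk k x ≤ f x) ∧
      (∀ k, (∫⁻ x, fk k x) ≠ ⊤) ∧ (∀ k, essSup (fk k) volume ≠ ⊤) ∧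
      Filter.Tendsto (fun k => ∫⁻ x, fk k x) Filter.atTop (nhds (∫⁻ x, f x)) := by
  set fk : ℕ → ℝ → ℝ≥0∞ :=
    fun k x => min (f x) ((Icc (-(k:ℝ)) k).indicator (fun _ => (k:ℝ≥0∞)) x) with hfk
  have hmeas : ∀ k, Measurable (fk k) := fun k =>
    hf.min (measurable_const.indicator measurableSet_Icc)
  have hle : ∀ k x, fk k x ≤ f x := fun k x => min_le_left _ _
  have hbd : ∀ k x, fk k x ≤ (Icc (-(k:ℝ)) k).indicator (fun _ => (k:ℝ≥0∞)) x :=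
    fun k x => min_le_right _ _
  have hint : ∀ k, (∫⁻ x, fk k x) ≠ ⊤ := by
    intro k
    have h1 : (∫⁻ x, fk k x) ≤ ∫⁻ x, (Icc (-(k:ℝ)) k).indicator (fun _ => (k:ℝ≥0∞)) x :=
      lintegral_mono (hbd k)
    rw [lintegral_indicator measurableSet_Icc, setLIntegral_const] at h1
    exact ne_top_of_le_ne_top (ENNReal.mul_ne_top (ENNReal.natCast_ne_top k)
      (by rw [Real.volume_Icc]; exact ENNReal.ofReal_ne_top)) h1
  have hess : ∀ k, essSup (fk k) volume ≠ ⊤ := by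
    intro k
    have : essSup (fk k) volume ≤ (k:ℝ≥0∞) := by
      refine essSup_le_of_ae_le _ ?_
      apply ae_of_all
      intro x
      refine le_trans (hbd k x) ?_
      by_cases hx : x ∈ Icc (-(k:ℝ)) k
      · rw [indicator_of_mem hx]
      · rw [indicator_of_notMem hx]; exact zero_le
    exact ne_top_of_le_ne_top (ENNReal.natCast_ne_top k) this
  have hmono : Monotone fk := by
    intro k k' hkk' x
    apply min_le_min le_rfl
    by_cases hx : x ∈ Icc (-(k:ℝ)) k
    · have hx' : x ∈ Icc (-(k':ℝ)) k' := by
        rcases hx with ⟨h1, h2⟩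
        have : (k:ℝ) ≤ k' := Nat.cast_le.2 hkk'
        exact ⟨by linarith, by linarith⟩
      rw [indicator_of_mem hx, indicator_of_mem hx']
      exact Nat.cast_le.2 hkk'
    · rw [indicator_of_notMem hx]
      exact zero_le
  have hsup : ∀ x, (⨆ k, fk k x) = f x := by
    intro x
    apply le_antisymm (iSup_le fun k => hle k x)
    obtain ⟨N, hN⟩ := exists_nat_ge |x|
    have hmem : ∀ m : ℕ, x ∈ Icc (-((N+m:ℕ):ℝ)) ((N+m:ℕ):ℝ) := by
      intro m
      have h1 : |x| ≤ ((N+m:ℕ):ℝ) := le_trans hN (by push_cast; linarith [Nat.cast_nonneg (α := ℝ) m])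
      rw [abs_le] at h1
      exact ⟨h1.1, h1.2⟩
    have hval : ∀ m : ℕ, fk (N+m) x = min (f x) ((N+m:ℕ):ℝ≥0∞) := by
      intro m
      rw [hfk]
      simp only [indicator_of_mem (hmem m)]
    have hsup2 : f x ≤ ⨆ m : ℕ, min (f x) ((N+m:ℕ):ℝ≥0∞) := by
      rcases eq_or_ne (f x) ⊤ with hfx | hfx
      · have : ∀ m : ℕ, min (f x) ((N+m:ℕ):ℝ≥0∞) = ((N+m:ℕ):ℝ≥0∞) := by
          intro m
          rw [hfx]
          exact min_eq_right le_top
        calc f x = ⊤ := hfx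
          _ = ⨆ m : ℕ, ((m:ℕ):ℝ≥0∞) := ENNReal.iSup_natCast.symm
          _ ≤ ⨆ m : ℕ, ((N+m:ℕ):ℝ≥0∞) := by
              apply iSup_mono
              intro m
              exact Nat.cast_le.2 (Nat.le_add_left m N)
          _ = ⨆ m : ℕ, min (f x) ((N+m:ℕ):ℝ≥0∞) := by
              apply iSup_congr
              intro m
              rw [this m]
      · obtain ⟨M, hM⟩ := ENNReal.exists_nat_gt hfx
        have : min (f x) ((N+M:ℕ):ℝ≥0∞) = f x := by
          apply min_eq_left
          refine le_trans hM.le (Nat.cast_le.2 (Nat.le_add_left M N))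
        calc f x = min (f x) ((N+M:ℕ):ℝ≥0∞) := this.symm
          _ ≤ ⨆ m : ℕ, min (f x) ((N+m:ℕ):ℝ≥0∞) := le_iSup (fun m => min (f x) ((N+m:ℕ):ℝ≥0∞)) M
    calc f x ≤ ⨆ m : ℕ, min (f x) ((N+m:ℕ):ℝ≥0∞) := hsup2
      _ = ⨆ m : ℕ, fk (N+m) x := by
          apply iSup_congr
          intro m
          rw [hval m]
      _ ≤ ⨆ k, fk k x := by
          apply iSup_le
          intro m
          exact le_iSup (fun k => fk k x) (N+m)
  have htend : Filter.Tendsto (fun k => ∫⁻ x, fk k x) Filter.atTop (nhds (∫⁻ x, f x)) := by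
    have hmonoint : Monotone fun k => ∫⁻ x, fk k x :=
      fun k k' hkk' => lintegral_mono fun x => hmono hkk' x
    have := tendsto_atTop_iSup hmonoint
    rwa [← lintegral_iSup hmeas hmono, lintegral_congr hsup] at this
  exact ⟨fk, hmeas, hle, hint, hess, htend⟩

/-- 1-D Prékopa–Leindler. -/
lemma pl_dim1 {t : ℝ} (ht0 : 0 < t) (ht1 : t < 1) (f g h : ℝ → ℝ≥0∞)
    (hf : Measurable f) (hg : Measurable g) (hh : Measurable h)
    (hyp : ∀ x y : ℝ, f x ^ (1 - t) * g y ^ t ≤ h ((1 - t) * x + t * y)) :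
    (∫⁻ x, f x) ^ (1 - t) * (∫⁻ y, g y) ^ t ≤ ∫⁻ z, h z := by
  have h1t : (0:ℝ) < 1 - t := by linarith
  rcases eq_or_ne (∫⁻ x, f x) 0 with hf0 | hf0
  · rw [hf0, ENNReal.zero_rpow_of_pos h1t, zero_mul]
    exact zero_le
  rcases eq_or_ne (∫⁻ y, g y) 0 with hg0 | hg0
  · rw [hg0, ENNReal.zero_rpow_of_pos ht0, mul_zero]
    exact zero_le
  obtain ⟨fk, hfkm, hfkle, hfkT, hfkess, hfktend⟩ := trunc_family f hf
  obtain ⟨gk, hgkm, hgkle, hgkT, hgkess, hgktend⟩ := trunc_family g hg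
  have hbound : ∀ k, (∫⁻ x, fk k x) ^ (1 - t) * (∫⁻ y, gk k y) ^ t ≤ ∫⁻ z, h z := by
    intro k
    rcases eq_or_ne (∫⁻ x, fk k x) 0 with h0 | h0
    · rw [h0, ENNReal.zero_rpow_of_pos h1t, zero_mul]
      exact zero_le
    rcases eq_or_ne (∫⁻ y, gk k y) 0 with h0' | h0'
    · rw [h0', ENNReal.zero_rpow_of_pos ht0, mul_zero]
      exact zero_le
    apply pl_dim1_core ht0 ht1 (fk k) (gk k) h (hfkm k) (hgkm k) hh
      (fun x y => le_trans (mul_le_mul' (ENNReal.rpow_le_rpow (hfkle k x) h1t.le)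
        (ENNReal.rpow_le_rpow (hgkle k y) ht0.le)) (hyp x y))
      h0 (hfkT k) h0' (hgkT k) (hfkess k) (hgkess k)
  have htendF : Filter.Tendsto (fun k => (∫⁻ x, fk k x) ^ (1 - t)) Filter.atTop
      (nhds ((∫⁻ x, f x) ^ (1 - t))) :=
    (ENNReal.continuous_rpow_const.tendsto _).comp hfktend
  have htendG : Filter.Tendsto (fun k => (∫⁻ y, gk k y) ^ t) Filter.atTop
      (nhds ((∫⁻ y, g y) ^ t)) :=
    (ENNReal.continuous_rpow_const.tendsto _).comp hgktend
  have htend := ENNReal.Tendsto.mul htendF (Or.inl (rpow_ne_zero' hf0 h1t)) htendG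
    (Or.inl (rpow_ne_zero' hg0 ht0))
  exact le_of_tendsto htend (Filter.Eventually.of_forall hbound)

lemma measurable_cons_pair {n : ℕ} :
    Measurable (fun p : ℝ × (Fin n → ℝ) => (Fin.cons p.1 p.2 : Fin (n+1) → ℝ)) := by
  apply measurable_pi_lambda
  intro i
  refine Fin.cases ?_ ?_ i
  · simpa using measurable_fst
  · intro j
    simp only [Fin.cons_succ]
    exact (measurable_pi_apply j).comp measurable_snd

lemma measurable_cons_const {n : ℕ} (a : ℝ) :
    Measurable (fun y : Fin n → ℝ => (Fin.cons a y : Fin (n+1) → ℝ)) :=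
  measurable_cons_pair.comp (measurable_const.prodMk measurable_id)

lemma cons_linear {n : ℕ} (t : ℝ) (a b : ℝ) (x y : Fin n → ℝ) :
    (1 - t) • (Fin.cons a x : Fin (n+1) → ℝ) + t • (Fin.cons b y : Fin (n+1) → ℝ)
      = Fin.cons ((1 - t) * a + t * b) ((1 - t) • x + t • y) := by
  funext i
  refine Fin.cases ?_ ?_ i
  · simp
  · intro j
    simp

/-- Fubini step: lintegral over `Fin (n+1) → ℝ` via `Fin.cons`. -/
lemma lintegral_cons {n : ℕ} (F : (Fin (n+1) → ℝ) → ℝ≥0∞) (hF : Measurable F) :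
    (∫⁻ x, F x) = ∫⁻ a : ℝ, ∫⁻ y : Fin n → ℝ, F (Fin.cons a y) := by
  have hmp := (measurePreserving_piFinSuccAbove (fun _ : Fin (n+1) => (volume : Measure ℝ)) 0).symm
  have hcomp : Measurable fun p : ℝ × (Fin n → ℝ) => F (Fin.cons p.1 p.2) :=
    hF.comp measurable_cons_pair
  have hsymm : ∀ p : ℝ × (Fin n → ℝ),
      (MeasurableEquiv.piFinSuccAbove (fun _ : Fin (n+1) => ℝ) 0).symm p
        = Fin.cons p.1 p.2 := by
    intro p
    simp [MeasurableEquiv.piFinSuccAbove, Fin.insertNth_zero, Fin.consEquiv]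
  calc (∫⁻ x, F x)
      = ∫⁻ x, F x ∂(Measure.pi fun _ => volume) := by rw [volume_pi]
    _ = ∫⁻ p, F ((MeasurableEquiv.piFinSuccAbove (fun _ : Fin (n+1) => ℝ) 0).symm p)
          ∂((volume : Measure ℝ).prod (Measure.pi fun _ : Fin n => volume)) :=
        (hmp.lintegral_comp hF).symm
    _ = ∫⁻ p, F (Fin.cons p.1 p.2)
          ∂((volume : Measure ℝ).prod (Measure.pi fun _ : Fin n => volume)) := by
        apply lintegral_congr
        intro p
        rw [hsymm p]
    _ = ∫⁻ a : ℝ, ∫⁻ y : Fin n → ℝ, F (Fin.cons a y) ∂(Measure.pi fun _ : Fin n => volume) := by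
        rw [lintegral_prod _ hcomp.aemeasurable]
    _ = ∫⁻ a : ℝ, ∫⁻ y : Fin n → ℝ, F (Fin.cons a y) := by
        apply lintegral_congr
        intro a
        rw [← volume_pi]

/-- Prékopa–Leindler on `Fin n → ℝ`. -/
lemma pl_pi : ∀ (n : ℕ) {t : ℝ}, 0 < t → t < 1 → ∀ f g h : (Fin n → ℝ) → ℝ≥0∞,
    Measurable f → Measurable g → Measurable h →
    (∀ x y, f x ^ (1 - t) * g y ^ t ≤ h ((1 - t) • x + t • y)) →
    (∫⁻ x, f x) ^ (1 - t) * (∫⁻ y, g y) ^ t ≤ ∫⁻ z, h z := by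
  intro n
  induction n with
  | zero =>
    intro t ht0 ht1 f g h hf hg hh hyp
    have h1t : (0:ℝ) < 1 - t := by linarith
    set c : Fin 0 → ℝ := fun i => i.elim0 with hc
    have huniv : (volume : Measure (Fin 0 → ℝ)) univ = 1 := by
      rw [volume_pi, Measure.pi_univ]
      simp
    have hconst : ∀ F : (Fin 0 → ℝ) → ℝ≥0∞, (∫⁻ x, F x) = F c := by
      intro F
      have : F = fun _ => F c := funext fun x => congrArg F (Subsingleton.elim _ _)
      rw [this, lintegral_const, huniv, mul_one]
    rw [hconst f, hconst g, hconst h]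
    have := hyp c c
    have hcc : (1 - t) • c + t • c = c := Subsingleton.elim _ _
    rwa [hcc] at this
  | succ n IH =>
    intro t ht0 ht1 f g h hf hg hh hyp
    have h1t : (0:ℝ) < 1 - t := by linarith
    set F := fun a : ℝ => ∫⁻ y, f (Fin.cons a y) with hF
    set G := fun b : ℝ => ∫⁻ y, g (Fin.cons b y) with hG
    set H := fun c : ℝ => ∫⁻ y, h (Fin.cons c y) with hH
    have hFm : Measurable F :=
      Measurable.lintegral_prod_right (hf.comp measurable_cons_pair)
    have hGm : Measurable G :=
      Measurable.lintegral_prod_right (hg.comp measurable_cons_pair)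
    have hHm : Measurable H :=
      Measurable.lintegral_prod_right (hh.comp measurable_cons_pair)
    have hypFGH : ∀ a b : ℝ, F a ^ (1 - t) * G b ^ t ≤ H ((1 - t) * a + t * b) := by
      intro a b
      apply IH ht0 ht1 (fun y => f (Fin.cons a y)) (fun y => g (Fin.cons b y))
        (fun y => h (Fin.cons ((1 - t) * a + t * b) y))
        (hf.comp (measurable_cons_const a)) (hg.comp (measurable_cons_const b))
        (hh.comp (measurable_cons_const _))
      intro x y
      have := hyp (Fin.cons a x) (Fin.cons b y)
      rwa [cons_linear] at this
    have hmain := pl_dim1 ht0 ht1 F G H hFm hGm hHm hypFGH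
    rw [lintegral_cons f hf, lintegral_cons g hg, lintegral_cons h hh]
    exact hmain

/-- Prékopa–Leindler on Euclidean space. -/
lemma pl_euclidean {n : ℕ} {t : ℝ} (ht0 : 0 < t) (ht1 : t < 1)
    (f g h : EuclideanSpace ℝ (Fin n) → ℝ≥0∞)
    (hf : Measurable f) (hg : Measurable g) (hh : Measurable h)
    (hyp : ∀ x y, f x ^ (1 - t) * g y ^ t ≤ h ((1 - t) • x + t • y)) :
    (∫⁻ x, f x) ^ (1 - t) * (∫⁻ y, g y) ^ t ≤ ∫⁻ z, h z := by
  set e := (MeasurableEquiv.toLp 2 (Fin n → ℝ)).symm with he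
  have hvp : MeasurePreserving (⇑e.symm) volume volume :=
    (EuclideanSpace.volume_preserving_symm_measurableEquiv_toLp (Fin n)).symm e
  have hlin : ∀ (x y : Fin n → ℝ),
      e.symm ((1 - t) • x + t • y) = (1 - t) • e.symm x + t • e.symm y := by
    intro x y
    rw [he]
    rfl
  have hkey := pl_pi n ht0 ht1 (f ∘ e.symm) (g ∘ e.symm) (h ∘ e.symm)
    (hf.comp e.symm.measurable) (hg.comp e.symm.measurable) (hh.comp e.symm.measurable)
    (by
      intro x y
      simp only [comp_apply]
      rw [hlin]
      exact hyp (e.symm x) (e.symm y))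
  simp only [comp_apply] at hkey
  rwa [hvp.lintegral_comp hf, hvp.lintegral_comp hg, hvp.lintegral_comp hh] at hkey

/-- Multiplicative Brunn–Minkowski for compact sets in Euclidean space. -/
lemma mult_bm {n : ℕ} {t : ℝ} (ht0 : 0 < t) (ht1 : t < 1)
    {A B : Set (EuclideanSpace ℝ (Fin n))} (hA : IsCompact A) (hB : IsCompact B) :
    volume A ^ (1 - t) * volume B ^ t ≤ volume ((1 - t) • A + t • B) := by
  have h1t : (0:ℝ) < 1 - t := by linarith
  set C : Set (EuclideanSpace ℝ (Fin n)) := (1 - t) • A + t • B with hC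
  have hCc : IsCompact C := by
    rw [hC]
    have h1 : IsCompact ((1 - t) • A) := by
      rw [← Set.image_smul]
      exact hA.image (continuous_const_smul _)
    have h2 : IsCompact (t • B) := by
      rw [← Set.image_smul]
      exact hB.image (continuous_const_smul _)
    exact h1.add h2
  have key := pl_euclidean ht0 ht1 (A.indicator 1) (B.indicator 1) (C.indicator 1)
    (measurable_one.indicator hA.measurableSet)
    (measurable_one.indicator hB.measurableSet)
    (measurable_one.indicator hCc.measurableSet) ?_
  · rwa [lintegral_indicator_one hA.measurableSet, lintegral_indicator_one hB.measurableSet,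
      lintegral_indicator_one hCc.measurableSet] at key
  · intro x y
    by_cases hx : x ∈ A
    · by_cases hy : y ∈ B
      · have hmem : (1 - t) • x + t • y ∈ C := ⟨_, ⟨x, hx, rfl⟩, _, ⟨y, hy, rfl⟩, rfl⟩
        rw [indicator_of_mem hx, indicator_of_mem hy, indicator_of_mem hmem]
        simp [ENNReal.one_rpow]
      · rw [indicator_of_notMem hy]
        rw [ENNReal.zero_rpow_of_pos ht0, mul_zero]
        exact zero_le
    · rw [indicator_of_notMem hx]
      rw [ENNReal.zero_rpow_of_pos h1t, zero_mul]
      exact zero_le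

/-- Scaled multiplicative Brunn–Minkowski. -/
lemma scaled_mult_bm {n : ℕ} {s : ℝ} (hs0 : 0 < s) (hs1 : s < 1)
    {K L : Set (EuclideanSpace ℝ (Fin n))} (hK : IsCompact K) (hL : IsCompact L)
    (hK0 : volume K ≠ 0) (hKT : volume K ≠ ⊤) (hL0 : volume L ≠ 0) (hLT : volume L ≠ ⊤)
    {c d : ℝ} (hc : 0 < c) (hd : 0 < d) :
    ENNReal.ofReal (((c / (1 - s)) ^ n * (volume K).toReal) ^ (1 - s)
        * (((d / s) ^ n * (volume L).toReal) ^ s))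
      ≤ volume (c • K + d • L) := by
  have h1s : (0:ℝ) < 1 - s := by linarith
  have haR : 0 < (volume K).toReal := ENNReal.toReal_pos hK0 hKT
  have hbR : 0 < (volume L).toReal := ENNReal.toReal_pos hL0 hLT
  have hcs : 0 < c / (1 - s) := div_pos hc h1s
  have hds : 0 < d / s := div_pos hd hs0
  have hdecomp : c • K + d • L = (1 - s) • ((c / (1 - s)) • K) + s • ((d / s) • L) := by
    rw [smul_smul, smul_smul]
    congr 2 <;> field_simp
  have hsmulvol : ∀ (r : ℝ), 0 < r → ∀ M : Set (EuclideanSpace ℝ (Fin n)),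
      volume (r • M) = ENNReal.ofReal (r ^ n) * volume M := by
    intro r hr M
    rw [Measure.addHaar_smul]
    congr 2
    rw [finrank_euclideanSpace_fin, abs_of_pos (pow_pos hr n)]
  have hK' : IsCompact ((c / (1 - s)) • K) := by
    rw [← Set.image_smul]; exact hK.image (continuous_const_smul _)
  have hL' : IsCompact ((d / s) • L) := by
    rw [← Set.image_smul]; exact hL.image (continuous_const_smul _)
  have hBM := mult_bm hs0 hs1 hK' hL'
  rw [hsmulvol _ hcs, hsmulvol _ hds] at hBM
  rw [hdecomp]
  refine le_trans (le_of_eq ?_) hBM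
  have h1 : ENNReal.ofReal ((c / (1 - s)) ^ n) * volume K
      = ENNReal.ofReal ((c / (1 - s)) ^ n * (volume K).toReal) := by
    rw [ENNReal.ofReal_mul (le_of_lt (pow_pos hcs n)), ENNReal.ofReal_toReal hKT]
  have h2 : ENNReal.ofReal ((d / s) ^ n) * volume L
      = ENNReal.ofReal ((d / s) ^ n * (volume L).toReal) := by
    rw [ENNReal.ofReal_mul (le_of_lt (pow_pos hds n)), ENNReal.ofReal_toReal hLT]
  rw [h1, h2, ENNReal.ofReal_rpow_of_pos (by positivity),
    ENNReal.ofReal_rpow_of_pos (by positivity), ← ENNReal.ofReal_mul (by positivity)]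

/-- Real-number computation at the optimal parameters. -/
lemma real_core {n : ℕ} (hn : 0 < n) {p aR bR : ℝ} (hp : 1 ≤ p) (ha : 0 < aR) (hb : 0 < bR) :
    ∃ lam s : ℝ, lam ∈ Icc (0:ℝ) 1 ∧ 0 < s ∧ s < 1 ∧
      0 < (1 - lam) ^ (1 - p⁻¹) ∧ 0 < lam ^ (1 - p⁻¹) ∧
      (((1 - lam) ^ (1 - p⁻¹) / (1 - s)) ^ n * aR) ^ (1 - s)
        * ((lam ^ (1 - p⁻¹) / s) ^ n * bR) ^ s
      = (aR ^ (p / (n:ℝ)) + bR ^ (p / (n:ℝ))) ^ ((n : ℝ) / p) := by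
  have hp0 : (0:ℝ) < p := lt_of_lt_of_le one_pos hp
  have hn0 : (0:ℝ) < (n:ℝ) := Nat.cast_pos.2 hn
  set α := aR ^ ((n:ℝ)⁻¹) with hα
  set β := bR ^ ((n:ℝ)⁻¹) with hβ
  have hα0 : 0 < α := Real.rpow_pos_of_pos ha _
  have hβ0 : 0 < β := Real.rpow_pos_of_pos hb _
  set A := aR ^ (p / (n:ℝ)) with hA
  set B := bR ^ (p / (n:ℝ)) with hB
  have hA0 : 0 < A := Real.rpow_pos_of_pos ha _
  have hB0 : 0 < B := Real.rpow_pos_of_pos hb _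
  set S := A + B with hS
  have hS0 : 0 < S := by positivity
  set lam := B / S with hlam
  have hlam0 : 0 ≤ lam := by positivity
  have hlam1 : lam ≤ 1 := by
    rw [hlam, div_le_one hS0, hS]
    linarith
  have h1lam : 1 - lam = A / S := by
    rw [hlam, hS]
    field_simp
    ring
  set e := 1 - p⁻¹ with he
  have hc0 : 0 < (1 - lam) ^ e := by
    rw [h1lam]
    exact Real.rpow_pos_of_pos (by positivity) _
  have hd0 : 0 < lam ^ e := by
    rw [hlam]
    exact Real.rpow_pos_of_pos (by positivity) _
  set c := (1 - lam) ^ e with hc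
  set d := lam ^ e with hd
  -- A = α ^ p etc.
  have hAα : A = α ^ p := by
    rw [hA, hα, ← Real.rpow_mul ha.le]
    congr 1
    field_simp
  have hBβ : B = β ^ p := by
    rw [hB, hβ, ← Real.rpow_mul hb.le]
    congr 1
    field_simp
  have haRα : α ^ n = aR := by
    rw [hα, ← Real.rpow_natCast (aR ^ ((n:ℝ)⁻¹)) n, ← Real.rpow_mul ha.le,
      inv_mul_cancel₀ hn0.ne', Real.rpow_one]
  have hbRβ : β ^ n = bR := by
    rw [hβ, ← Real.rpow_natCast (bR ^ ((n:ℝ)⁻¹)) n, ← Real.rpow_mul hb.le,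
      inv_mul_cancel₀ hn0.ne', Real.rpow_one]
  -- key identities
  have hkey1 : c * α = A / S ^ e := by
    rw [hc, h1lam, Real.div_rpow hA0.le hS0.le, div_mul_eq_mul_div]
    congr 1
    rw [hAα, ← Real.rpow_mul hα0.le]
    nth_rewrite 2 [← Real.rpow_one α]
    rw [← Real.rpow_add hα0]
    congr 1
    rw [he]
    field_simp
    ring
  have hkey2 : d * β = B / S ^ e := by
    rw [hd, hlam, Real.div_rpow hB0.le hS0.le, div_mul_eq_mul_div]
    congr 1
    rw [hBβ, ← Real.rpow_mul hβ0.le]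
    nth_rewrite 2 [← Real.rpow_one β]
    rw [← Real.rpow_add hβ0]
    congr 1
    rw [he]
    field_simp
    ring
  have hsum : c * α + d * β = S ^ p⁻¹ := by
    rw [hkey1, hkey2, ← add_div, ← hS]
    nth_rewrite 1 [← Real.rpow_one S]
    rw [← Real.rpow_sub hS0]
    congr 1
    rw [he]
    ring
  set u := c * α with hu
  set v := d * β with hv
  have hu0 : 0 < u := mul_pos hc0 hα0
  have hv0 : 0 < v := mul_pos hd0 hβ0
  set σ := u + v with hσ
  have hσ0 : 0 < σ := by positivity
  set s := v / σ with hs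
  have hs0 : 0 < s := by positivity
  have hs1 : s < 1 := by
    rw [hs, div_lt_one hσ0, hσ]
    linarith
  have h1s : 1 - s = u / σ := by
    rw [hs, hσ]
    field_simp
    ring
  refine ⟨lam, s, ⟨hlam0, hlam1⟩, hs0, hs1, hc0, hd0, ?_⟩
  have hstep1 : (c / (1 - s)) ^ n * aR = σ ^ n := by
    rw [← haRα, ← mul_pow]
    congr 1
    rw [h1s, hu]
    field_simp [hc0.ne', hα0.ne', hσ0.ne']
  have hstep2 : (d / s) ^ n * bR = σ ^ n := by
    rw [← hbRβ, ← mul_pow]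
    congr 1
    rw [hs, hv]
    field_simp [hd0.ne', hβ0.ne', hσ0.ne']
  rw [hstep1, hstep2, ← Real.rpow_add (pow_pos hσ0 n)]
  have : (1 - s) + s = 1 := by ring
  rw [this, Real.rpow_one, hsum, ← Real.rpow_natCast (S ^ p⁻¹) n, ← Real.rpow_mul hS0.le]
  congr 1
  field_simp

/-- Derivation of the `L_p` Brunn–Minkowski inequality from the functional
inequality: the characteristic functions `f = χ_K`, `g = χ_L`, `h = χ_{K+ₚL}`
satisfy the hypothesis (indeed `χ_{K+ₚL}((1-λ)^{1/q}x + λ^{1/q}y) = 1` for all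
`x ∈ K, y ∈ L, λ ∈ [0,1]`), and consequently
`V*ₙ(K +ₚ L)^{p/n} ≥ Vₙ(K)^{p/n} + Vₙ(L)^{p/n}`. -/
theorem lp_bm_from_functional {n : ℕ} (hn : 0 < n) (p : ℝ) (hp : 1 ≤ p)
    (K L : Set (En n)) (hK : K.Nonempty) (hL : L.Nonempty)
    (hKc : IsCompact K) (hLc : IsCompact L) :
    (∀ x ∈ K, ∀ y ∈ L, ∀ t ∈ Icc (0:ℝ) 1,
      (lpSum p K L).indicator (fun _ => (1 : ℝ))
        (((1 - t) ^ (1 - p⁻¹)) • x + (t ^ (1 - p⁻¹)) • y) = 1) ∧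
    volume K ^ (p / n) + volume L ^ (p / n) ≤ volume (lpSum p K L) ^ (p / n) := by
  constructor
  · intro x hx y hy t ht
    have hmem : ((1 - t) ^ (1 - p⁻¹)) • x + (t ^ (1 - p⁻¹)) • y ∈ lpSum p K L := by
      exact ⟨x, hx, y, hy, t, ht, rfl⟩
    exact indicator_of_mem hmem _
  · obtain ⟨x₀, hx₀⟩ := hK
    obtain ⟨y₀, hy₀⟩ := hL
    have hsn : (0:ℝ) < p / (n:ℝ) := div_pos (lt_of_lt_of_le one_pos hp) (Nat.cast_pos.2 hn)
    -- translation bounds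
    have hvolK : volume K ≤ volume (lpSum p K L) := by
      have hsub : ((((0:ℝ) ^ (1 - p⁻¹)) • y₀) +ᵥ K) ⊆ lpSum p K L := by
        rintro _ ⟨x, hx, rfl⟩
        refine ⟨x, hx, y₀, hy₀, 0, ⟨le_rfl, zero_le_one⟩, ?_⟩
        show ((0:ℝ) ^ (1 - p⁻¹)) • y₀ + x
          = ((1 - 0:ℝ) ^ (1 - p⁻¹)) • x + (((0:ℝ)) ^ (1 - p⁻¹)) • y₀
        rw [sub_zero, Real.one_rpow, one_smul, add_comm]
      calc volume K = volume ((((0:ℝ) ^ (1 - p⁻¹)) • y₀) +ᵥ K) := (measure_vadd _ _ _).symm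
        _ ≤ volume (lpSum p K L) := measure_mono hsub
    have hvolL : volume L ≤ volume (lpSum p K L) := by
      have hsub : ((((0:ℝ) ^ (1 - p⁻¹)) • x₀) +ᵥ L) ⊆ lpSum p K L := by
        rintro _ ⟨y, hy, rfl⟩
        refine ⟨x₀, hx₀, y, hy, 1, ⟨zero_le_one, le_rfl⟩, ?_⟩
        show ((0:ℝ) ^ (1 - p⁻¹)) • x₀ + y
          = ((1 - 1:ℝ) ^ (1 - p⁻¹)) • x₀ + (((1:ℝ)) ^ (1 - p⁻¹)) • y
        rw [sub_self, Real.one_rpow, one_smul]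
      calc volume L = volume ((((0:ℝ) ^ (1 - p⁻¹)) • x₀) +ᵥ L) := (measure_vadd _ _ _).symm
        _ ≤ volume (lpSum p K L) := measure_mono hsub
    rcases eq_or_ne (volume K) 0 with hK0 | hK0
    · rw [hK0, ENNReal.zero_rpow_of_pos hsn, zero_add]
      exact ENNReal.rpow_le_rpow hvolL hsn.le
    rcases eq_or_ne (volume L) 0 with hL0 | hL0
    · rw [hL0, ENNReal.zero_rpow_of_pos hsn, add_zero]
      exact ENNReal.rpow_le_rpow hvolK hsn.le
    -- main case
    have hKT : volume K ≠ ⊤ := hKc.measure_lt_top.ne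
    have hLT : volume L ≠ ⊤ := hLc.measure_lt_top.ne
    have haR : 0 < (volume K).toReal := ENNReal.toReal_pos hK0 hKT
    have hbR : 0 < (volume L).toReal := ENNReal.toReal_pos hL0 hLT
    obtain ⟨lam, s, hlamI, hs0, hs1, hc0, hd0, hcore⟩ :=
      real_core hn hp haR hbR
    have hincl : ((1 - lam) ^ (1 - p⁻¹)) • K + (lam ^ (1 - p⁻¹)) • L ⊆ lpSum p K L := by
      rintro z ⟨x', ⟨x, hx, rfl⟩, y', ⟨y, hy, rfl⟩, rfl⟩
      exact ⟨x, hx, y, hy, lam, hlamI, rfl⟩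
    have hBM := scaled_mult_bm hs0 hs1 hKc hLc hK0 hKT hL0 hLT hc0 hd0
    have hle : ENNReal.ofReal
        (((volume K).toReal ^ (p / (n:ℝ)) + (volume L).toReal ^ (p / (n:ℝ))) ^ ((n:ℝ) / p))
        ≤ volume (lpSum p K L) := by
      rw [← hcore]
      exact le_trans hBM (measure_mono hincl)
    have hSpos : (0:ℝ) < (volume K).toReal ^ (p / (n:ℝ)) + (volume L).toReal ^ (p / (n:ℝ)) := by
      positivity
    calc volume K ^ (p / (n:ℝ)) + volume L ^ (p / (n:ℝ))
        = ENNReal.ofReal ((volume K).toReal ^ (p / (n:ℝ)))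
          + ENNReal.ofReal ((volume L).toReal ^ (p / (n:ℝ))) := by
          rw [← ENNReal.ofReal_rpow_of_pos haR, ← ENNReal.ofReal_rpow_of_pos hbR,
            ENNReal.ofReal_toReal hKT, ENNReal.ofReal_toReal hLT]
      _ = ENNReal.ofReal ((volume K).toReal ^ (p / (n:ℝ))
            + (volume L).toReal ^ (p / (n:ℝ))) := by
          rw [ENNReal.ofReal_add (by positivity) (by positivity)]
      _ = (ENNReal.ofReal (((volume K).toReal ^ (p / (n:ℝ))
            + (volume L).toReal ^ (p / (n:ℝ))) ^ ((n:ℝ) / p))) ^ (p / (n:ℝ)) := by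
          rw [ENNReal.ofReal_rpow_of_pos (Real.rpow_pos_of_pos hSpos _),
            ← Real.rpow_mul hSpos.le]
          congr 1
          rw [div_mul_div_comm, mul_comm, div_self (by positivity), Real.rpow_one]
      _ ≤ volume (lpSum p K L) ^ (p / (n:ℝ)) := ENNReal.rpow_le_rpow hle hsn.le

end
end
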